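/- arXiv:2502.13517 — 7 statements merged into one kernel-verified Lean document; each statement's English description precedes it below -/
import Mathlib

section
/- Let 0<p<∞ and let φ: ℕ₀ → [0,∞) be given on dyadic values (write φ(2^j)). Fix k₀∈ℕ₀ and m₀∈ℤ^d, and let λ⁰ be the sequence on ℤ^d equal to 1 on indices m with Q_{0,m} ⊂ Q_{-k₀,m₀} and 0 otherwise. If sup_{j≥k₀} φ(2^j) 2^{(k₀−j)d/p} < ∞, then λ⁰ belongs to the generalised Morrey sequence space m_{φ,p}(ℤ^d) and its norm equals sup_{j∈ℕ₀} φ(2^j) · min(2^{(k₀−j)d/p}, 1). -/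
open ENNReal Filter

noncomputable section

/-- `Q_{0,k} ⊂ Q_{-j,m}` for dyadic cubes `Q_{-j,m} = 2^j([0,1)^d + m)`. -/
def inCube (d j : ℕ) (m k : Fin d → ℤ) : Prop :=
  ∀ i, 2 ^ j * m i ≤ k i ∧ k i < 2 ^ j * (m i + 1)

/-- the local quantity `(Σ_{k : Q_{0,k} ⊂ Q_{-j,m}} |λ_k|^p)^{1/p}`, in `ℝ≥0∞`. -/
def localSum (d : ℕ) (p : ℝ) (j : ℕ) (m : Fin d → ℤ)
    (lam : (Fin d → ℤ) → ℂ) : ℝ≥0∞ :=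
  (∑' k : {k : Fin d → ℤ // inCube d j m k}, ENNReal.ofReal ‖lam k.1‖ ^ p) ^ (1 / p)

/-- quasi-norm of the generalised Morrey sequence space `m_{φ,p}(ℤ^d)`;
`φ j` stands for `φ(2^j)`. -/
def mNorm (d : ℕ) (p : ℝ) (φ : ℕ → ℝ) (lam : (Fin d → ℤ) → ℂ) : ℝ≥0∞ :=
  ⨆ (j : ℕ) (m : Fin d → ℤ),
    ENNReal.ofReal (φ j) * (2 : ℝ≥0∞) ^ (-((j : ℝ) * d) / p) * localSum d p j m lam

def ellpNorm (d : ℕ) (p : ℝ) (lam : (Fin d → ℤ) → ℂ) : ℝ≥0∞ :=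
  (∑' k : Fin d → ℤ, ENNReal.ofReal ‖lam k‖ ^ p) ^ (1 / p)

def linftyNorm (d : ℕ) (lam : (Fin d → ℤ) → ℂ) : ℝ≥0∞ :=
  ⨆ k : Fin d → ℤ, ENNReal.ofReal ‖lam k‖

/-- the class `𝒢_p(𝔻)`: `φ(2^k)` is positive, nondecreasing and
`2^{-kd/p} φ(2^k)` is nonincreasing. -/
def Gp (d : ℕ) (p : ℝ) (φ : ℕ → ℝ) : Prop :=
  (∀ k, 0 < φ k) ∧
  ∀ j k : ℕ, j ≤ k → φ j ≤ φ k ∧ φ k ≤ φ j * 2 ^ (((k : ℝ) - j) * d / p)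

/-- the intersection box `Q_{-j,m} ∩ Q_{-k₀,m₀}` as a finset of lattice points -/
def IB (d j k₀ : ℕ) (m m₀ : Fin d → ℤ) : Finset (Fin d → ℤ) :=
  Fintype.piFinset fun i => Finset.Ico (max (2 ^ j * m i) (2 ^ k₀ * m₀ i))
    (min (2 ^ j * m i + 2 ^ j) (2 ^ k₀ * m₀ i + 2 ^ k₀))

lemma mem_IB {d j k₀ : ℕ} {m m₀ k : Fin d → ℤ} :
    k ∈ IB d j k₀ m m₀ ↔ inCube d j m k ∧ inCube d k₀ m₀ k := by
  unfold IB inCube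
  simp only [Fintype.mem_piFinset, Finset.mem_Ico, max_le_iff, lt_min_iff, mul_add, mul_one]
  exact ⟨fun h => ⟨fun i => ⟨(h i).1.1, (h i).2.1⟩, fun i => ⟨(h i).1.2, (h i).2.2⟩⟩,
    fun h i => ⟨⟨(h.1 i).1, (h.2 i).1⟩, ⟨(h.1 i).2, (h.2 i).2⟩⟩⟩

lemma card_IB_le (d j k₀ : ℕ) (m m₀ : Fin d → ℤ) :
    (IB d j k₀ m m₀).card ≤ 2 ^ (d * min j k₀) := by
  unfold IB
  rw [Fintype.card_piFinset]
  have hb : ∀ i : Fin d, (Finset.Ico (max (2 ^ j * m i) (2 ^ k₀ * m₀ i))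
      (min (2 ^ j * m i + 2 ^ j) (2 ^ k₀ * m₀ i + 2 ^ k₀))).card ≤ 2 ^ min j k₀ := by
    intro i
    rw [Int.card_Ico]
    rcases le_total j k₀ with h | h
    · rw [min_eq_left h]
      have h1 : min (2 ^ j * m i + 2 ^ j) (2 ^ k₀ * m₀ i + 2 ^ k₀) -
          max (2 ^ j * m i) (2 ^ k₀ * m₀ i) ≤ (2 : ℤ) ^ j := by
        have := min_le_left (2 ^ j * m i + 2 ^ j) (2 ^ k₀ * m₀ i + 2 ^ k₀)
        have := le_max_left (2 ^ j * m i) (2 ^ k₀ * m₀ i)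
        linarith
      have h2 : ((2 : ℤ) ^ j) = ((2 ^ j : ℕ) : ℤ) := by push_cast; ring
      calc _ ≤ ((2 : ℤ) ^ j).toNat := Int.toNat_le_toNat h1
        _ = 2 ^ j := by rw [h2, Int.toNat_natCast]
    · rw [min_eq_right h]
      have h1 : min (2 ^ j * m i + 2 ^ j) (2 ^ k₀ * m₀ i + 2 ^ k₀) -
          max (2 ^ j * m i) (2 ^ k₀ * m₀ i) ≤ (2 : ℤ) ^ k₀ := by
        have := min_le_right (2 ^ j * m i + 2 ^ j) (2 ^ k₀ * m₀ i + 2 ^ k₀)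
        have := le_max_right (2 ^ j * m i) (2 ^ k₀ * m₀ i)
        linarith
      have h2 : ((2 : ℤ) ^ k₀) = ((2 ^ k₀ : ℕ) : ℤ) := by push_cast; ring
      calc _ ≤ ((2 : ℤ) ^ k₀).toNat := Int.toNat_le_toNat h1
        _ = 2 ^ k₀ := by rw [h2, Int.toNat_natCast]
  calc ∏ i, (Finset.Ico (max (2 ^ j * m i) (2 ^ k₀ * m₀ i))
        (min (2 ^ j * m i + 2 ^ j) (2 ^ k₀ * m₀ i + 2 ^ k₀))).card
      ≤ ∏ _i : Fin d, 2 ^ min j k₀ := Finset.prod_le_prod' fun i _ => hb i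
    _ = 2 ^ (d * min j k₀) := by
        rw [Finset.prod_const, Finset.card_univ, Fintype.card_fin, ← pow_mul, mul_comm]

lemma exists_card_IB (d j k₀ : ℕ) (m₀ : Fin d → ℤ) :
    ∃ m : Fin d → ℤ, (IB d j k₀ m m₀).card = 2 ^ (d * min j k₀) := by
  rcases le_total j k₀ with h | h
  · refine ⟨fun i => 2 ^ (k₀ - j) * m₀ i, ?_⟩
    have hpow : (2 : ℤ) ^ j * 2 ^ (k₀ - j) = 2 ^ k₀ := by
      rw [← pow_add]; congr 1; omega
    have h2j : (2 : ℤ) ^ j ≤ 2 ^ k₀ := pow_le_pow_right₀ (by norm_num) h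
    unfold IB
    rw [Fintype.card_piFinset]
    have hfac : ∀ i : Fin d, (Finset.Ico
        (max (2 ^ j * (2 ^ (k₀ - j) * m₀ i)) (2 ^ k₀ * m₀ i))
        (min (2 ^ j * (2 ^ (k₀ - j) * m₀ i) + 2 ^ j) (2 ^ k₀ * m₀ i + 2 ^ k₀))).card
        = 2 ^ j := by
      intro i
      have he : (2 : ℤ) ^ j * (2 ^ (k₀ - j) * m₀ i) = 2 ^ k₀ * m₀ i := by
        rw [← mul_assoc, hpow]
      rw [he, max_self, min_eq_left (by linarith), Int.card_Ico, add_sub_cancel_left]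
      have h2 : ((2 : ℤ) ^ j) = ((2 ^ j : ℕ) : ℤ) := by push_cast; ring
      rw [h2, Int.toNat_natCast]
    calc (∏ i, _) = ∏ _i : Fin d, 2 ^ j := Finset.prod_congr rfl fun i _ => hfac i
      _ = 2 ^ (d * min j k₀) := by
          rw [Finset.prod_const, Finset.card_univ, Fintype.card_fin, ← pow_mul,
            mul_comm, min_eq_left h]
  · refine ⟨fun i => m₀ i / 2 ^ (j - k₀), ?_⟩
    have hpow : (2 : ℤ) ^ k₀ * 2 ^ (j - k₀) = 2 ^ j := by
      rw [← pow_add]; congr 1; omega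
    have hpos : (0 : ℤ) < 2 ^ (j - k₀) := by positivity
    have hk₀pos : (0 : ℤ) < 2 ^ k₀ := by positivity
    unfold IB
    rw [Fintype.card_piFinset]
    have hfac : ∀ i : Fin d, (Finset.Ico
        (max (2 ^ j * (m₀ i / 2 ^ (j - k₀))) (2 ^ k₀ * m₀ i))
        (min (2 ^ j * (m₀ i / 2 ^ (j - k₀)) + 2 ^ j) (2 ^ k₀ * m₀ i + 2 ^ k₀))).card
        = 2 ^ k₀ := by
      intro i
      set q : ℤ := m₀ i / 2 ^ (j - k₀) with hq
      set r : ℤ := m₀ i % 2 ^ (j - k₀) with hr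
      have hdm : 2 ^ (j - k₀) * q + r = m₀ i := Int.mul_ediv_add_emod _ _
      have hr0 : 0 ≤ r := Int.emod_nonneg _ (by positivity)
      have hr1 : r < 2 ^ (j - k₀) := Int.emod_lt_of_pos _ hpos
      have hle : 2 ^ j * q ≤ 2 ^ k₀ * m₀ i := by
        rw [← hpow, mul_assoc]
        have : (2:ℤ) ^ (j - k₀) * q ≤ m₀ i := by linarith
        exact mul_le_mul_of_nonneg_left this hk₀pos.le
      have hge : 2 ^ k₀ * m₀ i + 2 ^ k₀ ≤ 2 ^ j * q + 2 ^ j := by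
        rw [← hpow, mul_assoc]
        have h1 : m₀ i + 1 ≤ 2 ^ (j - k₀) * q + 2 ^ (j - k₀) := by linarith
        have := mul_le_mul_of_nonneg_left h1 hk₀pos.le
        linarith [this]
      rw [max_eq_right hle, min_eq_right hge, Int.card_Ico, add_sub_cancel_left]
      have h2 : ((2 : ℤ) ^ k₀) = ((2 ^ k₀ : ℕ) : ℤ) := by push_cast; ring
      rw [h2, Int.toNat_natCast]
    calc (∏ i, _) = ∏ _i : Fin d, 2 ^ k₀ := Finset.prod_congr rfl fun i _ => hfac i
      _ = 2 ^ (d * min j k₀) := by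
          rw [Finset.prod_const, Finset.card_univ, Fintype.card_fin, ← pow_mul,
            mul_comm, min_eq_right h]

theorem stmt_0 (d : ℕ) (hd : 0 < d) (p : ℝ) (hp : 0 < p)
    (φ : ℕ → ℝ) (hφ : ∀ j, 0 ≤ φ j) (hφne : ¬ ∀ j, φ j = 0)
    (k₀ : ℕ) (m₀ : Fin d → ℤ) (lam0 : (Fin d → ℤ) → ℂ)
    (hlam1 : ∀ m, inCube d k₀ m₀ m → lam0 m = 1)
    (hlam0 : ∀ m, ¬ inCube d k₀ m₀ m → lam0 m = 0)
    (hsup : (⨆ j ∈ Set.Ici k₀, ENNReal.ofReal (φ j) *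
      (2 : ℝ≥0∞) ^ ((((k₀ : ℝ) - j) * d) / p)) < ⊤) :
    mNorm d p φ lam0 < ⊤ ∧
    mNorm d p φ lam0 =
      ⨆ j : ℕ, ENNReal.ofReal (φ j) *
        min ((2 : ℝ≥0∞) ^ ((((k₀ : ℝ) - j) * d) / p)) 1 := by
  classical
  -- value of the summand
  have hval : ∀ k, ENNReal.ofReal ‖lam0 k‖ ^ p = if inCube d k₀ m₀ k then 1 else 0 := by
    intro k
    by_cases h : inCube d k₀ m₀ k
    · rw [if_pos h, hlam1 k h]; simp
    · rw [if_neg h, hlam0 k h]; simp [ENNReal.zero_rpow_of_pos hp]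
  -- localSum as a cardinality
  have hls : ∀ (j : ℕ) (m : Fin d → ℤ),
      localSum d p j m lam0 = ((IB d j k₀ m m₀).card : ℝ≥0∞) ^ (1 / p) := by
    intro j m
    unfold localSum
    congr 1
    have h1 : (∑' k : {k : Fin d → ℤ // inCube d j m k}, ENNReal.ofReal ‖lam0 k.1‖ ^ p)
        = ∑' k : (Fin d → ℤ), {k : Fin d → ℤ | inCube d j m k}.indicator
            (fun k => ENNReal.ofReal ‖lam0 k‖ ^ p) k :=
      tsum_subtype {k : Fin d → ℤ | inCube d j m k} (fun k => ENNReal.ofReal ‖lam0 k‖ ^ p)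
    rw [h1, tsum_eq_sum (s := IB d j k₀ m m₀) ?_]
    · rw [Finset.sum_congr rfl (g := fun _ => (1 : ℝ≥0∞)) ?_]
      · simp
      · intro x hx
        obtain ⟨h1x, h2x⟩ := mem_IB.mp hx
        have e1 : ({k | inCube d j m k}.indicator
            (fun k => ENNReal.ofReal ‖lam0 k‖ ^ p)) x = ENNReal.ofReal ‖lam0 x‖ ^ p :=
          Set.indicator_of_mem h1x _
        rw [e1, hval, if_pos h2x]
    · intro b hb
      by_cases hbP : inCube d j m b
      · have hbQ : ¬ inCube d k₀ m₀ b := fun hq => hb (mem_IB.mpr ⟨hbP, hq⟩)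
        have e1 : ({k | inCube d j m k}.indicator
            (fun k => ENNReal.ofReal ‖lam0 k‖ ^ p)) b = ENNReal.ofReal ‖lam0 b‖ ^ p :=
          Set.indicator_of_mem hbP _
        rw [e1, hval, if_neg hbQ]
      · exact Set.indicator_of_notMem hbP _
  -- the supremum over m at fixed level j
  have hkey : ∀ j : ℕ,
      (⨆ m : Fin d → ℤ, ENNReal.ofReal (φ j) * (2 : ℝ≥0∞) ^ (-((j : ℝ) * d) / p) *
        localSum d p j m lam0)
      = ENNReal.ofReal (φ j) * min ((2 : ℝ≥0∞) ^ ((((k₀ : ℝ) - j) * d) / p)) 1 := by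
    intro j
    have hsupm : (⨆ m : Fin d → ℤ, ((IB d j k₀ m m₀).card : ℝ≥0∞) ^ (1 / p))
        = ((2 ^ (d * min j k₀) : ℕ) : ℝ≥0∞) ^ (1 / p) := by
      apply le_antisymm
      · exact iSup_le fun m => ENNReal.rpow_le_rpow
          (by exact_mod_cast Nat.cast_le.mpr (card_IB_le d j k₀ m m₀))
          (by positivity)
      · obtain ⟨m, hm⟩ := exists_card_IB d j k₀ m₀
        exact le_iSup_of_le m (by rw [hm])
    have hstep : ∀ m, ENNReal.ofReal (φ j) * (2 : ℝ≥0∞) ^ (-((j : ℝ) * d) / p) *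
        localSum d p j m lam0
        = ENNReal.ofReal (φ j) * ((2 : ℝ≥0∞) ^ (-((j : ℝ) * d) / p) *
          ((IB d j k₀ m m₀).card : ℝ≥0∞) ^ (1 / p)) := by
      intro m; rw [hls j m, mul_assoc]
    rw [iSup_congr hstep, ← ENNReal.mul_iSup, ← ENNReal.mul_iSup, hsupm]
    congr 1
    -- now prove 2^{-jd/p} * (2^{d min j k₀})^{1/p} = min (2^{(k₀-j)d/p}) 1
    have hcast : ((2 ^ (d * min j k₀) : ℕ) : ℝ≥0∞) = (2 : ℝ≥0∞) ^ ((d * min j k₀ : ℕ) : ℝ) := by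
      rw [ENNReal.rpow_natCast]; push_cast; ring
    rw [hcast, ← ENNReal.rpow_mul, ← ENNReal.rpow_add _ _ (by norm_num) (by norm_num)]
    rcases le_total j k₀ with h | h
    · rw [min_eq_left h]
      have he : -((j : ℝ) * d) / p + (d * j : ℕ) * (1 / p) = 0 := by
        push_cast; field_simp; ring
      rw [he, ENNReal.rpow_zero]
      symm
      apply min_eq_right
      calc (1 : ℝ≥0∞) = 2 ^ (0:ℝ) := by rw [ENNReal.rpow_zero]
        _ ≤ 2 ^ ((((k₀ : ℝ) - j) * d) / p) := ENNReal.rpow_le_rpow_of_exponent_le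
            (by norm_num)
            (by
              apply div_nonneg _ hp.le
              apply mul_nonneg _ (Nat.cast_nonneg d)
              have : (j : ℝ) ≤ k₀ := by exact_mod_cast h
              linarith)
    · rw [min_eq_right h]
      have he : -((j : ℝ) * d) / p + (d * k₀ : ℕ) * (1 / p) = (((k₀ : ℝ) - j) * d) / p := by
        push_cast; field_simp; ring
      rw [he]
      symm
      apply min_eq_left
      calc (2:ℝ≥0∞) ^ ((((k₀ : ℝ) - j) * d) / p) ≤ 2 ^ (0:ℝ) :=
          ENNReal.rpow_le_rpow_of_exponent_le (by norm_num)
            (by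
              apply div_nonpos_of_nonpos_of_nonneg _ hp.le
              apply mul_nonpos_of_nonpos_of_nonneg _ (Nat.cast_nonneg d)
              have : (k₀ : ℝ) ≤ j := by exact_mod_cast h
              linarith)
        _ = 1 := ENNReal.rpow_zero
  have hmain : mNorm d p φ lam0 =
      ⨆ j : ℕ, ENNReal.ofReal (φ j) *
        min ((2 : ℝ≥0∞) ^ ((((k₀ : ℝ) - j) * d) / p)) 1 := by
    unfold mNorm
    exact iSup_congr hkey
  refine ⟨?_, hmain⟩
  rw [hmain]
  set C := (⨆ j ∈ Set.Ici k₀, ENNReal.ofReal (φ j) *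
      (2 : ℝ≥0∞) ^ ((((k₀ : ℝ) - j) * d) / p)) with hC
  set B := (Finset.range k₀).sup (fun j => ENNReal.ofReal (φ j)) with hB
  have hBlt : B < ⊤ := by
    rw [hB]
    apply Finset.sup_lt_iff (by norm_num) |>.mpr
    intro b _
    exact ENNReal.ofReal_lt_top
  have hle : (⨆ j : ℕ, ENNReal.ofReal (φ j) *
      min ((2 : ℝ≥0∞) ^ ((((k₀ : ℝ) - j) * d) / p)) 1) ≤ B ⊔ C := by
    apply iSup_le
    intro j
    rcases lt_or_ge j k₀ with h | h
    · refine le_sup_of_le_left ?_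
      calc ENNReal.ofReal (φ j) * min ((2 : ℝ≥0∞) ^ ((((k₀ : ℝ) - j) * d) / p)) 1
          ≤ ENNReal.ofReal (φ j) * 1 := mul_le_mul_right (min_le_right _ _) _
        _ = ENNReal.ofReal (φ j) := mul_one _
        _ ≤ B := by rw [hB]; exact Finset.le_sup (f := fun j => ENNReal.ofReal (φ j)) (Finset.mem_range.mpr h)
    · refine le_sup_of_le_right ?_
      calc ENNReal.ofReal (φ j) * min ((2 : ℝ≥0∞) ^ ((((k₀ : ℝ) - j) * d) / p)) 1
          ≤ ENNReal.ofReal (φ j) * (2 : ℝ≥0∞) ^ ((((k₀ : ℝ) - j) * d) / p) :=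
            mul_le_mul_right (min_le_left _ _) _
        _ ≤ C := le_iSup₂ (f := fun j (_ : j ∈ Set.Ici k₀) => ENNReal.ofReal (φ j) *
            (2 : ℝ≥0∞) ^ ((((k₀ : ℝ) - j) * d) / p)) j h
  exact lt_of_le_of_lt hle (sup_lt_iff.mpr ⟨hBlt, hsup⟩)
end
end

section
/- Let 0<p<∞ and φ: {2^j : j∈ℕ₀} → [0,∞) with φ(2^{k₁}) ≠ 0 for some k₁∈ℕ₀. Then the generalised Morrey sequence space m_{φ,p}(ℤ^d) contains a nonzero element if, and only if, sup_{j∈ℕ₀} φ(2^j) 2^{−jd/p} < ∞. -/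
open ENNReal Filter

noncomputable section

theorem stmt_1 (d : ℕ) (hd : 0 < d) (p : ℝ) (hp : 0 < p)
    (φ : ℕ → ℝ) (hφ : ∀ j, 0 ≤ φ j) (k₁ : ℕ) (hk₁ : φ k₁ ≠ 0) :
    (∃ lam : (Fin d → ℤ) → ℂ, lam ≠ 0 ∧ mNorm d p φ lam < ⊤) ↔
    (⨆ j : ℕ, ENNReal.ofReal (φ j) * (2 : ℝ≥0∞) ^ (-((j : ℝ) * d) / p)) < ⊤ := by
  constructor
  · rintro ⟨lam, hne, hfin⟩
    obtain ⟨k₀, hk₀⟩ : ∃ k, lam k ≠ 0 := by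
      by_contra h; push_neg at h; exact hne (funext fun k => h k)
    set c : ℝ≥0∞ := ENNReal.ofReal ‖lam k₀‖ with hc
    have hc0 : c ≠ 0 := by
      simp only [hc, ne_eq, ENNReal.ofReal_eq_zero, not_le]
      exact norm_pos_iff.mpr hk₀
    have hctop : c ≠ ⊤ := ENNReal.ofReal_ne_top
    have key : ∀ j : ℕ,
        ENNReal.ofReal (φ j) * (2 : ℝ≥0∞) ^ (-((j : ℝ) * d) / p) * c ≤ mNorm d p φ lam := by
      intro j
      set m : Fin d → ℤ := fun i => k₀ i / 2 ^ j with hm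
      have hmem : inCube d j m k₀ := by
        intro i
        set t : ℤ := 2 ^ j with ht
        have ht0 : 0 < t := by positivity
        have h1 : t * (k₀ i / t) + k₀ i % t = k₀ i := Int.mul_ediv_add_emod _ _
        have h2 : 0 ≤ k₀ i % t := Int.emod_nonneg _ ht0.ne'
        have h3 : k₀ i % t < t := Int.emod_lt_of_pos _ ht0
        have hexp : t * (m i + 1) = t * m i + t := by ring
        simp only [hm]
        constructor
        · linarith
        · have : t * ((k₀ i / t) + 1) = t * (k₀ i / t) + t := by ring
          linarith
      have hls : c ≤ localSum d p j m lam := by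
        have h1 : c ^ p ≤ ∑' k : {k // inCube d j m k}, ENNReal.ofReal ‖lam k.1‖ ^ p :=
          ENNReal.le_tsum (⟨k₀, hmem⟩ : {k // inCube d j m k})
        have h2 : (c ^ p) ^ (1 / p) = c := by
          rw [← ENNReal.rpow_mul, mul_one_div, div_self hp.ne', ENNReal.rpow_one]
        calc c = (c ^ p) ^ (1 / p) := h2.symm
          _ ≤ localSum d p j m lam := ENNReal.rpow_le_rpow h1 (by positivity)
      calc ENNReal.ofReal (φ j) * (2 : ℝ≥0∞) ^ (-((j : ℝ) * d) / p) * c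
          ≤ ENNReal.ofReal (φ j) * (2 : ℝ≥0∞) ^ (-((j : ℝ) * d) / p) * localSum d p j m lam :=
            mul_le_mul_right hls _
        _ ≤ mNorm d p φ lam := le_iSup_of_le j (le_iSup_of_le m le_rfl)
    have hle : (⨆ j : ℕ, ENNReal.ofReal (φ j) * (2 : ℝ≥0∞) ^ (-((j : ℝ) * d) / p))
        ≤ mNorm d p φ lam / c :=
      iSup_le fun j => (ENNReal.le_div_iff_mul_le (Or.inl hc0) (Or.inl hctop)).2 (key j)
    exact lt_of_le_of_lt hle (ENNReal.div_lt_top hfin.ne hc0)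
  · intro hsup
    refine ⟨fun k => if k = 0 then 1 else 0, ?_, ?_⟩
    · intro h
      have := congrFun h 0
      simp at this
    · have heq : (fun k : Fin d → ℤ => ENNReal.ofReal ‖(if k = 0 then (1 : ℂ) else 0)‖ ^ p)
          = fun k => if k = 0 then 1 else 0 := by
        funext k
        split
        · simp
        · simp [ENNReal.zero_rpow_of_pos hp]
      have hls : ∀ (j : ℕ) (m : Fin d → ℤ),
          localSum d p j m (fun k => if k = 0 then 1 else 0) ≤ 1 := by
        intro j m
        have h1 : (∑' k : {k : Fin d → ℤ // inCube d j m k},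
            ENNReal.ofReal ‖(if k.1 = 0 then (1 : ℂ) else 0)‖ ^ p) ≤ 1 := by
          calc (∑' k : {k : Fin d → ℤ // inCube d j m k},
              ENNReal.ofReal ‖(if k.1 = 0 then (1 : ℂ) else 0)‖ ^ p)
              ≤ ∑' k : Fin d → ℤ, ENNReal.ofReal ‖(if k = 0 then (1 : ℂ) else 0)‖ ^ p :=
                ENNReal.tsum_comp_le_tsum_of_injective Subtype.val_injective _
            _ = ∑' k : Fin d → ℤ, (if k = 0 then (1 : ℝ≥0∞) else 0) := by rw [heq]
            _ = 1 := tsum_ite_eq 0 1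
        calc localSum d p j m (fun k => if k = 0 then 1 else 0)
            ≤ (1 : ℝ≥0∞) ^ (1 / p) := ENNReal.rpow_le_rpow h1 (by positivity)
          _ = 1 := ENNReal.one_rpow _
      refine lt_of_le_of_lt ?_ hsup
      refine iSup_le fun j => iSup_le fun m => ?_
      calc ENNReal.ofReal (φ j) * (2 : ℝ≥0∞) ^ (-((j : ℝ) * d) / p)
            * localSum d p j m (fun k => if k = 0 then 1 else 0)
          ≤ ENNReal.ofReal (φ j) * (2 : ℝ≥0∞) ^ (-((j : ℝ) * d) / p) * 1 :=
            mul_le_mul_right (hls j m) _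
        _ = ENNReal.ofReal (φ j) * (2 : ℝ≥0∞) ^ (-((j : ℝ) * d) / p) := mul_one _
        _ ≤ _ := le_iSup (fun j => ENNReal.ofReal (φ j) * (2 : ℝ≥0∞) ^ (-((j : ℝ) * d) / p)) j
end
end

section
/- Let 0<p<∞ and φ∈𝒢_p(𝔻), i.e. k↦φ(2^k) is nondecreasing, k↦2^{−kd/p}φ(2^k) is nonincreasing, and φ(2^k)>0. Then the following are equivalent: (i) sup_{k∈ℕ₀} φ(2^k) < ∞; (ii) m_{φ,p}(ℤ^d) = ℓ_∞(ℤ^d) with equivalent norms; (iii) ℓ_∞(ℤ^d) ↪ m_{φ,p}(ℤ^d). -/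
open ENNReal Filter

noncomputable section

def cubeEquiv (d j : ℕ) (m : Fin d → ℤ) :
    (Fin d → Fin (2 ^ j)) ≃ {k : Fin d → ℤ // inCube d j m k} where
  toFun t := ⟨fun i => 2 ^ j * m i + ((t i : ℕ) : ℤ), by
    intro i
    have h1 : ((t i : ℕ) : ℤ) < (2:ℤ) ^ j := by exact_mod_cast (t i).is_lt
    have h0 : (0:ℤ) ≤ ((t i : ℕ) : ℤ) := Int.natCast_nonneg _
    constructor
    · show 2^j*m i ≤ 2^j*m i + ((t i:ℕ):ℤ); linarith
    · show 2^j*m i + ((t i:ℕ):ℤ) < 2^j*(m i+1)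
      have he : (2:ℤ)^j * (m i + 1) = 2^j * m i + 2^j := by ring
      rw [he]; linarith⟩
  invFun k := fun i => ⟨(k.1 i - 2 ^ j * m i).toNat, by
    have h := k.2 i
    have h1 : (0:ℤ) ≤ k.1 i - 2^j * m i := by linarith [h.1]
    have he : (2:ℤ)^j * (m i + 1) = 2^j * m i + 2^j := by ring
    have h2 : k.1 i - 2^j * m i < (2:ℤ)^j := by
      have := h.2; rw [he] at this; linarith
    have : ((k.1 i - 2^j * m i).toNat : ℤ) < (((2^j : ℕ)) : ℤ) := by
      rw [Int.toNat_of_nonneg h1]; exact_mod_cast h2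
    exact_mod_cast this⟩
  left_inv t := by
    funext i
    apply Fin.ext
    simp
  right_inv k := by
    apply Subtype.ext
    funext i
    have h := k.2 i
    have h1 : (0:ℤ) ≤ k.1 i - 2^j * m i := by linarith [h.1]
    simp [Int.toNat_of_nonneg h1]

lemma rpow_cancel (x : ℝ≥0∞) (p : ℝ) (hp : 0 < p) : (x ^ p) ^ (1/p) = x := by
  rw [← ENNReal.rpow_mul, mul_one_div, div_self hp.ne', ENNReal.rpow_one]

lemma two_rpow_neg_mul (a : ℝ) : (2:ℝ≥0∞) ^ (-a) * (2:ℝ≥0∞) ^ a = 1 := by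
  rw [← ENNReal.rpow_add _ _ two_ne_zero ENNReal.ofNat_ne_top]
  simp

lemma card_pow (d j : ℕ) :
    ((Fintype.card (Fin d → Fin (2^j)) : ℝ≥0∞)) = (2:ℝ≥0∞) ^ ((j*d : ℕ)) := by
  simp only [Fintype.card_fun, Fintype.card_fin]
  push_cast
  rw [← pow_mul]

lemma pow_eq_rpow (d j : ℕ) (p : ℝ) :
    ((2:ℝ≥0∞) ^ ((j*d : ℕ))) ^ (1/p) = (2:ℝ≥0∞) ^ (((j:ℝ)*d)/p) := by
  rw [← ENNReal.rpow_natCast 2 (j*d), ← ENNReal.rpow_mul]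
  congr 1
  push_cast
  ring

lemma localSum_le (d j : ℕ) (p : ℝ) (hp : 0 < p) (m : Fin d → ℤ)
    (lam : (Fin d → ℤ) → ℂ) :
    localSum d p j m lam ≤ 2 ^ (((j:ℝ)*d)/p) * linftyNorm d lam := by
  set L := linftyNorm d lam with hL
  have hterm : ∀ k : {k // inCube d j m k}, ENNReal.ofReal ‖lam k.1‖ ^ p ≤ L ^ p :=
    fun k => ENNReal.rpow_le_rpow (le_iSup (fun x => ENNReal.ofReal ‖lam x‖) k.1) hp.le
  haveI : Fintype {k // inCube d j m k} := Fintype.ofEquiv _ (cubeEquiv d j m)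
  have hsum : (∑' k : {k // inCube d j m k}, ENNReal.ofReal ‖lam k.1‖ ^ p)
      ≤ (2:ℝ≥0∞) ^ ((j*d : ℕ)) * L ^ p := by
    calc (∑' k : {k // inCube d j m k}, ENNReal.ofReal ‖lam k.1‖ ^ p)
        ≤ ∑' _k : {k // inCube d j m k}, L ^ p := ENNReal.tsum_le_tsum hterm
      _ = (Fintype.card {k // inCube d j m k}) * L ^ p := by
          rw [tsum_fintype, Finset.sum_const, Finset.card_univ, nsmul_eq_mul]
      _ = (2:ℝ≥0∞) ^ ((j*d : ℕ)) * L^p := by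
          rw [← Fintype.card_congr (cubeEquiv d j m), card_pow]
  calc localSum d p j m lam ≤ ((2:ℝ≥0∞) ^ ((j*d:ℕ)) * L ^ p) ^ (1/p) :=
      ENNReal.rpow_le_rpow hsum (by positivity)
    _ = 2 ^ (((j:ℝ)*d)/p) * L := by
      rw [ENNReal.mul_rpow_of_nonneg _ _ (by positivity), rpow_cancel L p hp,
        pow_eq_rpow]

lemma mNorm_le (d : ℕ) (p : ℝ) (hp : 0 < p) (φ : ℕ → ℝ) (C : ℝ)
    (hC : ∀ k, φ k ≤ C) (lam : (Fin d → ℤ) → ℂ) :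
    mNorm d p φ lam ≤ ENNReal.ofReal C * linftyNorm d lam := by
  refine iSup₂_le fun j m => ?_
  set L := linftyNorm d lam
  calc ENNReal.ofReal (φ j) * (2:ℝ≥0∞) ^ (-((j:ℝ)*d)/p) * localSum d p j m lam
      ≤ ENNReal.ofReal (φ j) * (2:ℝ≥0∞) ^ (-((j:ℝ)*d)/p) * (2 ^ (((j:ℝ)*d)/p) * L) := by
        gcongr
        exact localSum_le d j p hp m lam
    _ = ENNReal.ofReal (φ j) * L := by
        rw [mul_assoc, ← mul_assoc ((2:ℝ≥0∞) ^ (-((j:ℝ)*d)/p)), neg_div,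
          two_rpow_neg_mul, one_mul]
    _ ≤ ENNReal.ofReal C * L := by
        gcongr
        exact hC j

lemma le_mNorm (d : ℕ) (p : ℝ) (hp : 0 < p) (φ : ℕ → ℝ) (lam : (Fin d → ℤ) → ℂ) :
    ENNReal.ofReal (φ 0) * linftyNorm d lam ≤ mNorm d p φ lam := by
  rw [linftyNorm, ENNReal.mul_iSup]
  refine iSup_le fun k => ?_
  have hk : inCube d 0 k k := fun i => by
    constructor <;> simp [pow_zero]
  have h1 : ENNReal.ofReal ‖lam k‖ ≤ localSum d p 0 k lam := by
    have ht := ENNReal.le_tsum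
      (f := fun x : {x // inCube d 0 k x} => ENNReal.ofReal ‖lam x.1‖ ^ p) ⟨k, hk⟩
    calc ENNReal.ofReal ‖lam k‖ = (ENNReal.ofReal ‖lam k‖ ^ p) ^ (1/p) :=
        (rpow_cancel _ p hp).symm
      _ ≤ localSum d p 0 k lam := ENNReal.rpow_le_rpow ht (by positivity)
  calc ENNReal.ofReal (φ 0) * ENNReal.ofReal ‖lam k‖
      ≤ ENNReal.ofReal (φ 0) * (2:ℝ≥0∞) ^ (-(((0:ℕ):ℝ)*d)/p) * localSum d p 0 k lam := by
        simp only [Nat.cast_zero, zero_mul, neg_zero, zero_div, ENNReal.rpow_zero, mul_one]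
        gcongr
    _ ≤ mNorm d p φ lam := le_iSup₂ (f := fun j m =>
        ENNReal.ofReal (φ j) * (2:ℝ≥0∞) ^ (-((j:ℝ)*d)/p) * localSum d p j m lam) 0 k

lemma phi_le (d : ℕ) (p : ℝ) (hp : 0 < p) (φ : ℕ → ℝ) (C : ℝ≥0∞) (hC : C ≠ ⊤)
    (h : ∀ lam : (Fin d → ℤ) → ℂ, mNorm d p φ lam ≤ C * linftyNorm d lam) (j : ℕ) :
    φ j ≤ C.toReal := by
  classical
  set lam : (Fin d → ℤ) → ℂ := fun k => if inCube d j 0 k then 1 else 0 with hlam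
  have hL : linftyNorm d lam ≤ 1 := iSup_le fun k => by
    by_cases hk : inCube d j 0 k <;> simp [hlam, hk]
  have hls : localSum d p j 0 lam = (2:ℝ≥0∞) ^ (((j:ℝ)*d)/p) := by
    have hone : ∀ k : {k // inCube d j 0 k}, ENNReal.ofReal ‖lam k.1‖ ^ p = 1 := fun k => by
      simp [hlam, k.2]
    haveI : Fintype {k // inCube d j 0 k} := Fintype.ofEquiv _ (cubeEquiv d j 0)
    rw [localSum, tsum_congr hone, tsum_fintype]
    simp only [Finset.sum_const, Finset.card_univ, nsmul_eq_mul, mul_one]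
    rw [← Fintype.card_congr (cubeEquiv d j 0), card_pow, pow_eq_rpow]
  have key : ENNReal.ofReal (φ j) ≤ C := by
    have h1 : ENNReal.ofReal (φ j) ≤ mNorm d p φ lam := by
      calc ENNReal.ofReal (φ j)
          = ENNReal.ofReal (φ j) * (2:ℝ≥0∞) ^ (-((j:ℝ)*d)/p) * localSum d p j 0 lam := by
            rw [hls, mul_assoc, neg_div, two_rpow_neg_mul, mul_one]
        _ ≤ mNorm d p φ lam := le_iSup₂ (f := fun j m =>
            ENNReal.ofReal (φ j) * (2:ℝ≥0∞) ^ (-((j:ℝ)*d)/p) * localSum d p j m lam) j 0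
    have h2 : C * linftyNorm d lam ≤ C := by
      calc C * linftyNorm d lam ≤ C * 1 := by gcongr
        _ = C := mul_one C
    exact h1.trans ((h lam).trans h2)
  exact (ENNReal.ofReal_le_iff_le_toReal hC).mp key

theorem stmt_5 (d : ℕ) (hd : 0 < d) (p : ℝ) (hp : 0 < p)
    (φ : ℕ → ℝ) (hGp : Gp d p φ) :
    ((∃ C : ℝ, ∀ k, φ k ≤ C) ↔
      (∃ c C : ℝ≥0∞, 0 < c ∧ C < ⊤ ∧ ∀ lam : (Fin d → ℤ) → ℂ,
        c * linftyNorm d lam ≤ mNorm d p φ lam ∧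
        mNorm d p φ lam ≤ C * linftyNorm d lam)) ∧
    ((∃ C : ℝ, ∀ k, φ k ≤ C) ↔
      (∃ C : ℝ≥0∞, C < ⊤ ∧ ∀ lam : (Fin d → ℤ) → ℂ,
        mNorm d p φ lam ≤ C * linftyNorm d lam)) := by
  obtain ⟨hpos, _⟩ := hGp
  constructor
  · constructor
    · rintro ⟨C, hC⟩
      exact ⟨ENNReal.ofReal (φ 0), ENNReal.ofReal C, ENNReal.ofReal_pos.2 (hpos 0),
        ENNReal.ofReal_lt_top, fun lam =>
          ⟨le_mNorm d p hp φ lam, mNorm_le d p hp φ C hC lam⟩⟩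
    · rintro ⟨c, C, _, hCt, h⟩
      exact ⟨C.toReal, fun k => phi_le d p hp φ C hCt.ne (fun lam => (h lam).2) k⟩
  · constructor
    · rintro ⟨C, hC⟩
      exact ⟨ENNReal.ofReal C, ENNReal.ofReal_lt_top, fun lam => mNorm_le d p hp φ C hC lam⟩
    · rintro ⟨C, hCt, h⟩
      exact ⟨C.toReal, fun k => phi_le d p hp φ C hCt.ne h k⟩
end
end

section
/- Let 0<p<∞ and φ:{2^k: k∈ℕ₀}→[0,∞) with φ(2^{k₀})≠0 for some k₀ and sup_{k} φ(2^k)2^{−kd/p} < ∞. Then there exists φ̃∈𝒢_p(𝔻) such that m_{φ,p}(ℤ^d) = m_{φ̃,p}(ℤ^d) with equivalence of (quasi-)norms. -/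
open ENNReal Filter

noncomputable section

/-!
The regularised weight is `φ̃(2^j) = sup_i φ(2^i) 2^{-(i-j)₊ d/p}`, the least majorant of `φ` in
`𝒢_p(𝔻)`; it is finite because `φ(2^i) 2^{-id/p}` is bounded. The two quasi-norms even coincide.
Since `φ ≤ φ̃`, one inequality is monotonicity. For the other, the term with index `i` of
`φ̃(2^j) 2^{-jd/p} ‖λ‖_{Q_{-j,m}}` is bounded by `‖λ | m_{φ,p}‖`: for `i ≤ j` the cube `Q_{-j,m}` is
the union of `2^{(j-i)d}` cubes of level `i`, which costs exactly the factor `2^{(j-i)d/p}`; for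
`i ≥ j` it lies inside a cube of level `i`.
-/

lemma inCube_iff_eq_ediv {d j : ℕ} {m x : Fin d → ℤ} :
    inCube d j m x ↔ (fun i => x i / 2 ^ j) = m := by
  simp only [inCube, funext_iff, Int.ediv_eq_iff_of_pos (by positivity : (0:ℤ) < 2 ^ j)]
  exact forall_congr' fun i => by constructor <;> rintro ⟨h₁, h₂⟩ <;> constructor <;> linarith

lemma inCube_ancestor {d j : ℕ} (n : ℕ) {m x : Fin d → ℤ} (h : inCube d j m x) :
    inCube d (j + n) (fun i => m i / 2 ^ n) x := by
  rw [inCube_iff_eq_ediv] at h ⊢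
  subst h
  simp only [Int.ediv_ediv_of_nonneg (by positivity : (0:ℤ) ≤ 2 ^ j), pow_add]

lemma inCube_add_iff {d k n : ℕ} {m x : Fin d → ℤ} :
    inCube d (k + n) m x ↔ inCube d n m (fun i => x i / 2 ^ k) := by
  simp only [inCube_iff_eq_ediv, Int.ediv_ediv_of_nonneg (by positivity : (0:ℤ) ≤ 2 ^ k),
    pow_add]

lemma natCard_inCube (d n : ℕ) (m : Fin d → ℤ) :
    Nat.card {x // inCube d n m x} = 2 ^ (n * d) := by
  have hIco (i : Fin d) : Nat.card (Set.Ico (2 ^ n * m i) (2 ^ n * (m i + 1))) = 2 ^ n := by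
    rw [Nat.card_eq_fintype_card, Fintype.card_Ico, Int.card_Ico, mul_add_one,
      add_sub_cancel_left]
    exact_mod_cast Int.toNat_natCast (2 ^ n)
  change Nat.card {x : Fin d → ℤ // ∀ i, x i ∈ Set.Ico (2 ^ n * m i) (2 ^ n * (m i + 1))} = _
  rw [Nat.card_congr Equiv.subtypePiEquivPi, Nat.card_pi, Finset.prod_congr rfl fun i _ => hIco i,
    Finset.prod_const, Finset.card_univ, Fintype.card_fin, pow_mul]

instance (d n : ℕ) (m : Fin d → ℤ) : Finite {x // inCube d n m x} :=
  Nat.finite_of_card_ne_zero (by rw [natCard_inCube]; positivity)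

def inCubeSplitEquiv (d k n : ℕ) (m : Fin d → ℤ) :
    {x // inCube d (k + n) m x} ≃ Σ m' : {m' // inCube d n m m'}, {x // inCube d k m'.1 x} :=
  (Equiv.sigmaSubtypeFiberEquivSubtype (fun x i => x i / 2 ^ k) fun _ => inCube_add_iff).symm.trans
    (Equiv.sigmaCongrRight fun _ => Equiv.subtypeEquivRight fun _ => inCube_iff_eq_ediv.symm)

section LocalSum

variable {d : ℕ} {p : ℝ}

lemma localSum_le_ancestor (hp : 0 ≤ p) (j n : ℕ) (m : Fin d → ℤ) (lam : (Fin d → ℤ) → ℂ) :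
    localSum d p j m lam ≤ localSum d p (j + n) (fun i => m i / 2 ^ n) lam :=
  ENNReal.rpow_le_rpow
    (tsum_mono_subtype (fun x => ENNReal.ofReal ‖lam x‖ ^ p) fun _ => inCube_ancestor n)
    (by positivity)

lemma localSum_rpow (hp : 0 < p) (k : ℕ) (m : Fin d → ℤ) (lam : (Fin d → ℤ) → ℂ) :
    localSum d p k m lam ^ p = ∑' x : {x // inCube d k m x}, ENNReal.ofReal ‖lam x‖ ^ p := by
  rw [localSum, ← ENNReal.rpow_mul, one_div_mul_cancel hp.ne', ENNReal.rpow_one]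

lemma localSum_add_le (hp : 0 < p) (k n : ℕ) (m : Fin d → ℤ) (lam : (Fin d → ℤ) → ℂ) :
    localSum d p (k + n) m lam ≤ 2 ^ ((n : ℝ) * d / p) * ⨆ m', localSum d p k m' lam := by
  set B := ⨆ m', localSum d p k m' lam
  have hsum : localSum d p (k + n) m lam ^ p ≤ 2 ^ (n * d) * B ^ p := calc
    _ = ∑' m' : {m' // inCube d n m m'}, localSum d p k m' lam ^ p := by
      simp only [localSum_rpow hp]
      rw [← (inCubeSplitEquiv d k n m).symm.tsum_eq, ENNReal.tsum_sigma']
      rfl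
    _ ≤ ∑' _ : {m' // inCube d n m m'}, B ^ p :=
      ENNReal.tsum_le_tsum fun m' =>
        ENNReal.rpow_le_rpow (le_iSup (fun m' => localSum d p k m' lam) m'.1) hp.le
    _ = 2 ^ (n * d) * B ^ p := by
      rw [ENNReal.tsum_const, ENat.card_eq_coe_natCard, natCard_inCube]
      norm_cast
  calc localSum d p (k + n) m lam = (localSum d p (k + n) m lam ^ p) ^ (1 / p) := by
        rw [← ENNReal.rpow_mul, mul_one_div_cancel hp.ne', ENNReal.rpow_one]
    _ ≤ (2 ^ (n * d) * B ^ p) ^ (1 / p) := ENNReal.rpow_le_rpow hsum (by positivity)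
    _ = 2 ^ ((n : ℝ) * d / p) * B := by
      rw [ENNReal.mul_rpow_of_nonneg _ _ (by positivity), ← ENNReal.rpow_natCast,
        ← ENNReal.rpow_mul, ← ENNReal.rpow_mul, mul_one_div_cancel hp.ne', ENNReal.rpow_one,
        mul_one_div, Nat.cast_mul]

end LocalSum

def regWeightTerm (d : ℕ) (p : ℝ) (φ : ℕ → ℝ) (j i : ℕ) : ℝ :=
  φ i * 2 ^ ((min (j : ℝ) i - i) * d / p)

def regWeight (d : ℕ) (p : ℝ) (φ : ℕ → ℝ) (j : ℕ) : ℝ :=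
  ⨆ i, regWeightTerm d p φ j i

section RegWeight

variable {d : ℕ} {p : ℝ} {φ : ℕ → ℝ}

lemma regWeightTerm_self (j : ℕ) : regWeightTerm d p φ j j = φ j := by
  simp [regWeightTerm]

lemma regWeightTerm_bddAbove (hp : 0 ≤ p) {C : ℝ}
    (hC : ∀ k : ℕ, φ k * 2 ^ (-((k : ℝ) * d) / p) ≤ C) (j : ℕ) :
    BddAbove (Set.range (regWeightTerm d p φ j)) := by
  refine ⟨max C 0 * 2 ^ ((j : ℝ) * d / p), Set.forall_mem_range.2 fun i => ?_⟩
  have hsplit : (min (j : ℝ) i - i) * d / p = -((i : ℝ) * d) / p + min (j : ℝ) i * d / p := by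
    ring
  rw [regWeightTerm, hsplit, Real.rpow_add two_pos, ← mul_assoc]
  gcongr
  · exact le_max_of_le_left (hC i)
  · exact one_le_two
  · exact min_le_left _ _

lemma le_regWeight (hbdd : ∀ j, BddAbove (Set.range (regWeightTerm d p φ j))) (j : ℕ) :
    φ j ≤ regWeight d p φ j :=
  (regWeightTerm_self (d := d) (p := p) (φ := φ) j).symm.trans_le (le_ciSup (hbdd j) j)

lemma regWeight_mem_Gp (hbdd : ∀ j, BddAbove (Set.range (regWeightTerm d p φ j))) (hp : 0 ≤ p)
    (hφ : ∀ i, 0 ≤ φ i) {k₀ : ℕ} (hk₀ : 0 < φ k₀) :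
    Gp d p (regWeight d p φ) := by
  refine ⟨fun j => (by unfold regWeightTerm; positivity : 0 < regWeightTerm d p φ j k₀).trans_le
    (le_ciSup (hbdd j) k₀), fun j k hjk => ⟨ciSup_le fun i => ?_, ciSup_le fun i => ?_⟩⟩
  · refine le_trans ?_ (le_ciSup (hbdd k) i)
    unfold regWeightTerm
    gcongr
    · exact hφ i
    · exact one_le_two
  · have hexp : (min (k : ℝ) i - i) * d / p ≤ (min (j : ℝ) i - i) * d / p + (k - j) * d / p := by
      rw [← add_div, ← add_mul]
      gcongr
      have hjk' : (j : ℝ) ≤ k := by exact_mod_cast hjk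
      rcases min_cases (k : ℝ) i with ⟨hk, hk'⟩ | ⟨hk, hk'⟩ <;>
        rcases min_cases (j : ℝ) i with ⟨hj, hj'⟩ | ⟨hj, hj'⟩ <;> linarith
    calc regWeightTerm d p φ k i
        ≤ regWeightTerm d p φ j i * 2 ^ (((k : ℝ) - j) * d / p) := by
          rw [regWeightTerm, regWeightTerm, mul_assoc, ← Real.rpow_add two_pos]
          gcongr
          · exact hφ i
          · exact one_le_two
      _ ≤ regWeight d p φ j * 2 ^ (((k : ℝ) - j) * d / p) := by
          gcongr
          exact le_ciSup (hbdd j) i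

end RegWeight

section MNorm

variable {d : ℕ} {p : ℝ}

lemma le_mNorm_s7 (ψ : ℕ → ℝ) (j : ℕ) (m : Fin d → ℤ) (lam : (Fin d → ℤ) → ℂ) :
    ENNReal.ofReal (ψ j) * 2 ^ (-((j : ℝ) * d) / p) * localSum d p j m lam ≤ mNorm d p ψ lam :=
  le_iSup₂ (f := fun j m =>
    ENNReal.ofReal (ψ j) * 2 ^ (-((j : ℝ) * d) / p) * localSum d p j m lam) j m

lemma mNorm_mono {ψ ψ' : ℕ → ℝ} (h : ∀ j, ψ j ≤ ψ' j) (lam : (Fin d → ℤ) → ℂ) :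
    mNorm d p ψ lam ≤ mNorm d p ψ' lam :=
  iSup₂_mono fun j _ => by gcongr; exact h j

lemma two_rpow_mul_two_rpow (a b : ℝ) : (2 : ℝ≥0∞) ^ a * 2 ^ b = 2 ^ (a + b) :=
  (ENNReal.rpow_add a b two_ne_zero ofNat_ne_top).symm

variable (φ : ℕ → ℝ) (lam : (Fin d → ℤ) → ℂ)

lemma mul_localSum_le_mNorm_of_le (hp : 0 < p) {i j : ℕ} (hij : i ≤ j) (m : Fin d → ℤ) :
    ENNReal.ofReal (φ i) * 2 ^ (-((j : ℝ) * d) / p) * localSum d p j m lam ≤ mNorm d p φ lam := by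
  obtain ⟨n, rfl⟩ := Nat.exists_eq_add_of_le hij
  calc ENNReal.ofReal (φ i) * 2 ^ (-(((i + n : ℕ) : ℝ) * d) / p) * localSum d p (i + n) m lam
      ≤ ENNReal.ofReal (φ i) * 2 ^ (-(((i + n : ℕ) : ℝ) * d) / p) *
          (2 ^ ((n : ℝ) * d / p) * ⨆ m', localSum d p i m' lam) := by
        gcongr
        exact localSum_add_le hp i n m lam
    _ = ⨆ m', ENNReal.ofReal (φ i) * 2 ^ (-((i : ℝ) * d) / p) * localSum d p i m' lam := by
        have hexp : -(((i + n : ℕ) : ℝ) * d) / p + n * d / p = -((i : ℝ) * d) / p := by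
          push_cast
          ring
        rw [← mul_assoc, mul_assoc (ENNReal.ofReal _), two_rpow_mul_two_rpow, hexp,
          ENNReal.mul_iSup]
    _ ≤ mNorm d p φ lam := iSup_le fun m' => le_mNorm_s7 φ i m' lam

lemma mul_localSum_le_mNorm_of_ge (hp : 0 ≤ p) {i j : ℕ} (hji : j ≤ i) (m : Fin d → ℤ) :
    ENNReal.ofReal (φ i) * 2 ^ (-((i : ℝ) * d) / p) * localSum d p j m lam ≤ mNorm d p φ lam := by
  obtain ⟨n, rfl⟩ := Nat.exists_eq_add_of_le hji
  calc ENNReal.ofReal (φ (j + n)) * 2 ^ (-(((j + n : ℕ) : ℝ) * d) / p) * localSum d p j m lam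
      ≤ ENNReal.ofReal (φ (j + n)) * 2 ^ (-(((j + n : ℕ) : ℝ) * d) / p) *
          localSum d p (j + n) (fun k => m k / 2 ^ n) lam := by
        gcongr
        exact localSum_le_ancestor hp j n m lam
    _ ≤ mNorm d p φ lam := le_mNorm_s7 φ (j + n) _ lam

lemma mNorm_regWeight_le (hp : 0 < p) (hφ : ∀ i, 0 ≤ φ i)
    (hbdd : ∀ j, BddAbove (Set.range (regWeightTerm d p φ j))) :
    mNorm d p (regWeight d p φ) lam ≤ mNorm d p φ lam := by
  refine iSup₂_le fun j m => ?_
  rw [regWeight, Monotone.map_ciSup_of_continuousAt ENNReal.continuous_ofReal.continuousAt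
    ENNReal.ofReal_mono (hbdd j), ENNReal.iSup_mul, ENNReal.iSup_mul]
  refine iSup_le fun i => ?_
  rcases le_total i j with hij | hji
  · have hmin : min (j : ℝ) i = i := min_eq_right (by exact_mod_cast hij)
    rw [regWeightTerm, hmin, sub_self, zero_mul, zero_div, Real.rpow_zero, mul_one]
    exact mul_localSum_le_mNorm_of_le φ lam hp hij m
  · have hmin : min (j : ℝ) i = j := min_eq_left (by exact_mod_cast hji)
    rw [regWeightTerm, hmin, ENNReal.ofReal_mul (hφ i), ← ENNReal.ofReal_rpow_of_pos two_pos,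
      ENNReal.ofReal_ofNat, mul_assoc (ENNReal.ofReal _), two_rpow_mul_two_rpow,
      show ((j : ℝ) - i) * d / p + -((j : ℝ) * d) / p = -((i : ℝ) * d) / p by ring]
    exact mul_localSum_le_mNorm_of_ge φ lam hp.le hji m

end MNorm

theorem stmt_7_general (d : ℕ) (p : ℝ) (hp : 0 < p)
    (φ : ℕ → ℝ) (hφ : ∀ j, 0 ≤ φ j) (k₀ : ℕ) (hk₀ : φ k₀ ≠ 0)
    (hsup : ∃ C : ℝ, ∀ k : ℕ, φ k * (2 : ℝ) ^ (-((k : ℝ) * d) / p) ≤ C) :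
    ∃ φt : ℕ → ℝ, Gp d p φt ∧
      ∃ c C : ℝ≥0∞, 0 < c ∧ C < ⊤ ∧ ∀ lam : (Fin d → ℤ) → ℂ,
        c * mNorm d p φ lam ≤ mNorm d p φt lam ∧
        mNorm d p φt lam ≤ C * mNorm d p φ lam := by
  obtain ⟨C, hC⟩ := hsup
  have hbdd := regWeightTerm_bddAbove hp.le hC
  refine ⟨regWeight d p φ, regWeight_mem_Gp hbdd hp.le hφ ((hφ k₀).lt_of_ne' hk₀),
    1, 1, one_pos, one_lt_top, fun lam => ?_⟩
  simp only [one_mul]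
  exact ⟨mNorm_mono (le_regWeight hbdd) lam, mNorm_regWeight_le φ lam hp hφ hbdd⟩

theorem stmt_7 (d : ℕ) (hd : 0 < d) (p : ℝ) (hp : 0 < p)
    (φ : ℕ → ℝ) (hφ : ∀ j, 0 ≤ φ j) (k₀ : ℕ) (hk₀ : φ k₀ ≠ 0)
    (hsup : ∃ C : ℝ, ∀ k : ℕ, φ k * (2 : ℝ) ^ (-((k : ℝ) * d) / p) ≤ C) :
    ∃ φt : ℕ → ℝ, Gp d p φt ∧
      ∃ c C : ℝ≥0∞, 0 < c ∧ C < ⊤ ∧ ∀ lam : (Fin d → ℤ) → ℂ,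
        c * mNorm d p φ lam ≤ mNorm d p φt lam ∧
        mNorm d p φt lam ≤ C * mNorm d p φ lam :=
  stmt_7_general d p hp φ hφ k₀ hk₀ hsup
end
end

section
/- Let 0<p<∞, φ∈𝒢_p(𝔻), φ(1)=1, sup_k φ(2^k)=∞, and suppose r := r_φ satisfies p < r < ∞, where r_φ = sup{q : φ∈𝒢_q(𝔻)}. Then the weak-ℓ_r space ℓ_{r,∞}(ℤ^d) embeds continuously into m_{φ,p}(ℤ^d): there is C>0 with ‖λ|m_{φ,p}‖ ≤ C sup_{ν∈ℕ} ν^{1/r} λ*_ν for all λ∈ℓ_{r,∞}. -/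
open ENNReal Filter

noncomputable section

/-- non-increasing rearrangement `λ*_ν = inf{t ≥ 0 : #{m : |λ_m| > t} ≤ ν - 1}`. -/
def rearr (d : ℕ) (lam : (Fin d → ℤ) → ℂ) (ν : ℕ) : ℝ :=
  sInf {t : ℝ | 0 ≤ t ∧ {m : Fin d → ℤ | t < ‖lam m‖}.Finite ∧
    {m : Fin d → ℤ | t < ‖lam m‖}.ncard ≤ ν - 1}

/-- the weak `ℓ_r` quasi-norm `sup_{ν ≥ 1} ν^{1/r} λ*_ν`. -/
def weakNorm (d : ℕ) (r : ℝ) (lam : (Fin d → ℤ) → ℂ) : ℝ≥0∞ :=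
  ⨆ ν : ℕ, ENNReal.ofReal (((ν : ℝ) + 1) ^ (1 / r) * rearr d lam (ν + 1))

/-!
A weak-`ℓ_r` sequence with quasi-norm `W` has `#{k : |λ_k| > t} ≤ (W/t)^r`. On a dyadic cube
of `N = 2^{jd}` lattice points, cut `|λ_k|^p` at the level `T = W N^{-1/r}` and at the dyadic
levels `T 2^ℓ` above it: the part below `T` contributes at most `N T^p`, the `ℓ`-th layer at most
`N 2^{-rℓ} (T 2^{ℓ+1})^p`, and since `p < r` these form a geometric series, so
`Σ_cube |λ_k|^p ≲ W^p N^{1-p/r}`. The supremum `r = r_φ` is attained, so `φ(2^j) ≤ 2^{jd/r}`,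
and the Morrey weight `φ(2^j) N^{-1/p}` exactly cancels `N^{1/p-1/r}`.
-/

open scoped Finset

lemma ofReal_rpow_le_add_tsum_layers {f T p : ℝ} (hp : 0 < p) (hT : 0 < T) :
    ENNReal.ofReal f ^ p ≤ ENNReal.ofReal (T ^ p) +
      ∑' ℓ : ℕ, if T * 2 ^ ℓ < f then ENNReal.ofReal ((T * 2 ^ (ℓ + 1)) ^ p) else 0 := by
  classical
  rcases le_or_gt f T with hfT | hTf
  · refine le_add_right ?_
    rw [← ENNReal.ofReal_rpow_of_pos hT]
    exact ENNReal.rpow_le_rpow (ENNReal.ofReal_le_ofReal hfT) hp.le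
  have hex : ∃ n : ℕ, f ≤ T * 2 ^ n := by
    obtain ⟨n, hn⟩ := pow_unbounded_of_one_lt (f / T) one_lt_two
    exact ⟨n, ((div_lt_iff₀' hT).1 hn).le⟩
  obtain ⟨ℓ, hℓ⟩ : ∃ ℓ, Nat.find hex = ℓ + 1 := Nat.exists_eq_succ_of_ne_zero fun h0 => by
    have := Nat.find_spec hex
    rw [h0, pow_zero, mul_one] at this
    linarith
  have hlow : T * 2 ^ ℓ < f := not_le.1 (Nat.find_min hex (by omega))
  have hupp : f ≤ T * 2 ^ (ℓ + 1) := hℓ ▸ Nat.find_spec hex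
  calc ENNReal.ofReal f ^ p ≤ ENNReal.ofReal ((T * 2 ^ (ℓ + 1)) ^ p) := by
        rw [← ENNReal.ofReal_rpow_of_pos (by positivity)]
        exact ENNReal.rpow_le_rpow (ENNReal.ofReal_le_ofReal hupp) hp.le
    _ = if T * 2 ^ ℓ < f then ENNReal.ofReal ((T * 2 ^ (ℓ + 1)) ^ p) else 0 := (if_pos hlow).symm
    _ ≤ _ := le_add_left (ENNReal.le_tsum ℓ)

def layerConst (p r : ℝ) : ℝ≥0∞ :=
  1 + ENNReal.ofReal (2 ^ p) * (1 - ENNReal.ofReal (2 ^ (p - r)))⁻¹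

lemma layerConst_ne_top {p r : ℝ} (hpr : p < r) : layerConst p r ≠ ⊤ := by
  have hx : ENNReal.ofReal (2 ^ (p - r)) < 1 :=
    ENNReal.ofReal_lt_one.2 (Real.rpow_lt_one_of_one_lt_of_neg one_lt_two (by linarith))
  refine ENNReal.add_ne_top.2 ⟨one_ne_top, ENNReal.mul_ne_top ofReal_ne_top ?_⟩
  simpa [ENNReal.inv_eq_top, tsub_eq_zero_iff_le] using hx

lemma weakType_layer_eq {N T r p : ℝ} (hT : 0 < T) (ℓ : ℕ) :
    N * (T / (T * 2 ^ ℓ)) ^ r * (T * 2 ^ (ℓ + 1)) ^ p = N * T ^ p * 2 ^ p * (2 ^ (p - r)) ^ ℓ := by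
  have h2 : (0 : ℝ) < 2 := two_pos
  rw [div_mul_cancel_left₀ hT.ne', ← Real.rpow_natCast, ← Real.rpow_natCast, ← Real.rpow_natCast,
    ← Real.rpow_neg_one, ← Real.rpow_mul h2.le, ← Real.rpow_mul h2.le, ← Real.rpow_mul h2.le,
    Real.mul_rpow hT.le (by positivity), ← Real.rpow_mul h2.le]
  rw [mul_assoc N, mul_assoc N, mul_assoc N]
  congr 1
  rw [mul_left_comm, ← Real.rpow_add h2, mul_assoc (T ^ p), ← Real.rpow_add h2]
  congr 2
  push_cast
  ring

theorem sum_ofReal_rpow_le_of_weakType {ι : Type*} (s : Finset ι) (f : ι → ℝ) {p r T N : ℝ}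
    (hp : 0 < p) (hT : 0 < T) (hN : (#s : ℝ) ≤ N)
    (hweak : ∀ t, 0 < t → (#{i ∈ s | t < f i} : ℝ) ≤ N * (T / t) ^ r) :
    ∑ i ∈ s, ENNReal.ofReal (f i) ^ p ≤ ENNReal.ofReal (N * T ^ p) * layerConst p r := by
  classical
  have hN0 : 0 ≤ N := (Nat.cast_nonneg _).trans hN
  have hlayer (ℓ : ℕ) :
      ∑ i ∈ s, (if T * 2 ^ ℓ < f i then ENNReal.ofReal ((T * 2 ^ (ℓ + 1)) ^ p) else 0) ≤
        ENNReal.ofReal (N * T ^ p * 2 ^ p) * ENNReal.ofReal (2 ^ (p - r)) ^ ℓ := by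
    rw [← Finset.sum_filter, Finset.sum_const, nsmul_eq_mul, ← ENNReal.ofReal_natCast,
      ← ENNReal.ofReal_pow (by positivity), ← ENNReal.ofReal_mul (by positivity),
      ← ENNReal.ofReal_mul (by positivity), ← weakType_layer_eq hT]
    gcongr
    exact hweak _ (by positivity)
  calc ∑ i ∈ s, ENNReal.ofReal (f i) ^ p
      ≤ ∑ i ∈ s, (ENNReal.ofReal (T ^ p) +
          ∑' ℓ : ℕ, if T * 2 ^ ℓ < f i then ENNReal.ofReal ((T * 2 ^ (ℓ + 1)) ^ p) else 0) :=
        Finset.sum_le_sum fun i _ => ofReal_rpow_le_add_tsum_layers hp hT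
    _ = #s * ENNReal.ofReal (T ^ p) + ∑' ℓ : ℕ, ∑ i ∈ s,
          (if T * 2 ^ ℓ < f i then ENNReal.ofReal ((T * 2 ^ (ℓ + 1)) ^ p) else 0) := by
        rw [Finset.sum_add_distrib, Finset.sum_const, nsmul_eq_mul,
          Summable.tsum_finsetSum fun _ _ => ENNReal.summable]
    _ ≤ ENNReal.ofReal (N * T ^ p) + ∑' ℓ : ℕ,
          ENNReal.ofReal (N * T ^ p * 2 ^ p) * ENNReal.ofReal (2 ^ (p - r)) ^ ℓ := by
        gcongr with ℓ
        · rw [← ENNReal.ofReal_natCast, ← ENNReal.ofReal_mul (by positivity)]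
          gcongr
        · exact hlayer ℓ
    _ = ENNReal.ofReal (N * T ^ p) * layerConst p r := by
        rw [ENNReal.tsum_mul_left, ENNReal.tsum_geometric, layerConst,
          ENNReal.ofReal_mul (p := N * T ^ p) (by positivity), mul_add, mul_one, mul_assoc]

section WeakType

variable {d : ℕ} {lam : (Fin d → ℤ) → ℂ}

lemma finite_setOf_lt_norm (hlam : Tendsto lam cofinite (nhds 0)) {t : ℝ} (ht : 0 < t) :
    {k | t < ‖lam k‖}.Finite :=
  (eventually_cofinite.1 ((tendsto_norm_zero.comp hlam).eventually (gt_mem_nhds ht))).subset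
    fun _ hk => not_lt.2 (le_of_lt hk)

lemma rearr_set_nonempty (hlam : Tendsto lam cofinite (nhds 0)) (ν : ℕ) :
    {t : ℝ | 0 ≤ t ∧ {m | t < ‖lam m‖}.Finite ∧ {m | t < ‖lam m‖}.ncard ≤ ν - 1}.Nonempty := by
  obtain ⟨M, hM⟩ := (tendsto_norm_zero.comp hlam).bddAbove_range_of_cofinite
  have hempty : {m | max M 0 < ‖lam m‖} = ∅ :=
    Set.eq_empty_of_forall_notMem fun m hm =>
      lt_irrefl _ (hm.trans_le ((hM ⟨m, rfl⟩).trans (le_max_left M 0)))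
  exact ⟨max M 0, le_max_right M 0, hempty ▸ Set.finite_empty, by
    rw [hempty, Set.ncard_empty]; exact Nat.zero_le _⟩

lemma ncard_setOf_lt_norm_le (hlam : Tendsto lam cofinite (nhds 0)) {r W : ℝ} (hr : 0 < r)
    (hW0 : 0 ≤ W) (hW : weakNorm d r lam ≤ ENNReal.ofReal W) {t : ℝ} (ht : 0 < t) :
    ({k | t < ‖lam k‖}.ncard : ℝ) ≤ (W / t) ^ r := by
  set ν := ⌊(W / t) ^ r⌋₊
  have hν : (W / t) ^ r < ν + 1 := Nat.lt_floor_add_one _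
  have hweak : ((ν : ℝ) + 1) ^ (1 / r) * rearr d lam (ν + 1) ≤ W :=
    (ENNReal.ofReal_le_ofReal_iff hW0).1 ((le_iSup (fun ν : ℕ =>
      ENNReal.ofReal (((ν : ℝ) + 1) ^ (1 / r) * rearr d lam (ν + 1))) ν).trans hW)
  have hroot : W < t * ((ν : ℝ) + 1) ^ (1 / r) := by
    rw [← div_lt_iff₀' ht, ← Real.rpow_rpow_inv (div_nonneg hW0 ht.le) hr.ne', one_div]
    exact Real.rpow_lt_rpow (by positivity) hν (inv_pos.2 hr)
  have hrearr : rearr d lam (ν + 1) < t := by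
    by_contra! h
    have := mul_le_mul_of_nonneg_left h (by positivity : (0 : ℝ) ≤ ((ν : ℝ) + 1) ^ (1 / r))
    linarith
  obtain ⟨t', ⟨-, hfin, hcard⟩, ht't⟩ :=
    exists_lt_of_csInf_lt (rearr_set_nonempty hlam (ν + 1)) hrearr
  have hle : {k | t < ‖lam k‖}.ncard ≤ ν :=
    (Set.ncard_le_ncard (fun k hk => ht't.trans hk) hfin).trans hcard
  exact (Nat.cast_le.2 hle).trans (Nat.floor_le (by positivity))

end WeakType

def dyadicCube (d j : ℕ) (m : Fin d → ℤ) : Finset (Fin d → ℤ) :=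
  Finset.Icc (fun i => 2 ^ j * m i) (fun i => 2 ^ j * (m i + 1) - 1)

lemma mem_dyadicCube {d j : ℕ} {m k : Fin d → ℤ} : k ∈ dyadicCube d j m ↔ inCube d j m k := by
  simp only [dyadicCube, Finset.mem_Icc, Pi.le_def, inCube, Int.le_sub_one_iff, forall_and]

lemma card_dyadicCube (d j : ℕ) (m : Fin d → ℤ) : #(dyadicCube d j m) = 2 ^ (j * d) := by
  rw [dyadicCube, Pi.card_Icc, Finset.prod_congr rfl fun i _ => by
    rw [Int.card_Icc, show 2 ^ j * (m i + 1) - 1 + 1 - 2 ^ j * m i = ((2 ^ j : ℕ) : ℤ) by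
      push_cast; ring, Int.toNat_natCast],
    Finset.prod_const, Finset.card_univ, Fintype.card_fin, pow_mul]

lemma localSum_eq_sum_dyadicCube (d : ℕ) (p : ℝ) (j : ℕ) (m : Fin d → ℤ)
    (lam : (Fin d → ℤ) → ℂ) :
    localSum d p j m lam = (∑ k ∈ dyadicCube d j m, ENNReal.ofReal ‖lam k‖ ^ p) ^ (1 / p) := by
  rw [localSum, ← Finset.tsum_subtype, ← (Equiv.subtypeEquivRight fun k => mem_dyadicCube).tsum_eq]
  rfl

lemma le_mul_two_rpow_div_iff {a b c q : ℝ} (ha : 0 < a) (hb : 0 < b) (hq : 0 < q) :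
    b ≤ a * 2 ^ (c / q) ↔ q * Real.log (b / a) ≤ c * Real.log 2 := by
  rw [← div_le_iff₀' ha, ← Real.log_le_log_iff (div_pos hb ha) (by positivity),
    Real.log_rpow two_pos, div_mul_eq_mul_div, le_div_iff₀' hq]

lemma Gp_sSup {d : ℕ} {φ : ℕ → ℝ} (h : 0 < sSup {q : ℝ | 0 < q ∧ Gp d q φ}) :
    Gp d (sSup {q : ℝ | 0 < q ∧ Gp d q φ}) φ := by
  set S := {q : ℝ | 0 < q ∧ Gp d q φ}
  obtain ⟨q₀, -, hq₀⟩ : S.Nonempty := Set.nonempty_iff_ne_empty.2 fun hS => by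
    rw [hS, Real.sSup_empty] at h
    exact lt_irrefl 0 h
  refine ⟨hq₀.1, fun j k hjk => ⟨(hq₀.2 j k hjk).1, ?_⟩⟩
  have hφj := hq₀.1 j
  have hφk := hq₀.1 k
  rw [le_mul_two_rpow_div_iff hφj hφk h]
  have hB : 0 ≤ ((k : ℝ) - j) * d * Real.log 2 :=
    mul_nonneg (mul_nonneg (sub_nonneg.2 (Nat.cast_le.2 hjk)) d.cast_nonneg)
      (Real.log_nonneg one_le_two)
  have hL : 0 ≤ Real.log (φ k / φ j) :=
    Real.log_nonneg ((one_le_div hφj).2 (hq₀.2 j k hjk).1)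
  rcases hL.eq_or_lt with hL0 | hLpos
  · rw [← hL0, mul_zero]
    exact hB
  rw [← le_div_iff₀ hLpos]
  refine Real.sSup_le (fun q hq => ?_) (div_nonneg hB hLpos.le)
  rw [le_div_iff₀ hLpos, ← le_mul_two_rpow_div_iff hφj hφk hq.1]
  exact (hq.2.2 j k hjk).2

lemma ofReal_mul_two_rpow_mul_localSum_le {d : ℕ} {lam : (Fin d → ℤ) → ℂ}
    (hlam : Tendsto lam cofinite (nhds 0)) {p r W : ℝ} {φ : ℕ → ℝ} {j : ℕ} (hp : 0 < p)
    (hr : 0 < r) (hφ : φ j ≤ 2 ^ ((j : ℝ) * d / r)) (hW0 : 0 < W)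
    (hW : weakNorm d r lam ≤ ENNReal.ofReal W) (m : Fin d → ℤ) :
    ENNReal.ofReal (φ j) * 2 ^ (-((j : ℝ) * d) / p) * localSum d p j m lam ≤
      layerConst p r ^ (1 / p) * ENNReal.ofReal W := by
  set a : ℝ := j * d
  set T : ℝ := W / 2 ^ (a / r) with hT_def
  have hT : 0 < T := by positivity
  have hN : (#(dyadicCube d j m) : ℝ) ≤ 2 ^ a := by
    rw [card_dyadicCube, Nat.cast_pow, Nat.cast_ofNat, ← Real.rpow_natCast]
    push_cast
    rfl
  have hweak (t : ℝ) (ht : 0 < t) :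
      (#{k ∈ dyadicCube d j m | t < ‖lam k‖} : ℝ) ≤ 2 ^ a * (T / t) ^ r := by
    have hWt : W / t = 2 ^ (a / r) * (T / t) := by
      rw [hT_def]
      field_simp
    calc (#{k ∈ dyadicCube d j m | t < ‖lam k‖} : ℝ) ≤ {k | t < ‖lam k‖}.ncard := by
          rw [← Set.ncard_coe_finset]
          exact_mod_cast Set.ncard_le_ncard (fun k hk => (Finset.mem_filter.1 hk).2)
            (finite_setOf_lt_norm hlam ht)
      _ ≤ (W / t) ^ r := ncard_setOf_lt_norm_le hlam hr hW0.le hW ht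
      _ = 2 ^ a * (T / t) ^ r := by
          rw [hWt, Real.mul_rpow (by positivity) (by positivity), ← Real.rpow_mul two_pos.le,
            div_mul_cancel₀ _ hr.ne']
  have htwo : (2 : ℝ≥0∞) ^ (-a / p) = ENNReal.ofReal (2 ^ (a / p))⁻¹ := by
    rw [neg_div, ENNReal.rpow_neg, ENNReal.ofReal_inv_of_pos (by positivity),
      ← ENNReal.ofReal_rpow_of_pos two_pos, ENNReal.ofReal_ofNat]
  have hreal : 2 ^ (a / r) * (2 ^ (a / p))⁻¹ * (2 ^ a * T ^ p) ^ (1 / p) = W := by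
    rw [Real.mul_rpow (by positivity) (by positivity), ← Real.rpow_mul two_pos.le, one_div,
      Real.rpow_rpow_inv hT.le hp.ne', ← div_eq_mul_inv, hT_def]
    field_simp
  calc ENNReal.ofReal (φ j) * 2 ^ (-a / p) * localSum d p j m lam
      ≤ ENNReal.ofReal (2 ^ (a / r)) * ENNReal.ofReal (2 ^ (a / p))⁻¹ *
          (ENNReal.ofReal (2 ^ a * T ^ p) * layerConst p r) ^ (1 / p) := by
        rw [localSum_eq_sum_dyadicCube, htwo]
        gcongr
        exact sum_ofReal_rpow_le_of_weakType _ (fun k => ‖lam k‖) hp hT hN hweak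
    _ = layerConst p r ^ (1 / p) * ENNReal.ofReal W := by
        rw [ENNReal.mul_rpow_of_nonneg _ _ (by positivity),
          ENNReal.ofReal_rpow_of_nonneg (by positivity) (by positivity), ← hreal,
          ENNReal.ofReal_mul (by positivity), ENNReal.ofReal_mul (by positivity)]
        ring

lemma ENNReal.le_mul_of_forall_pos_le_ofReal {a b C : ℝ≥0∞} (hC0 : C ≠ 0) (hC : C ≠ ⊤)
    (h : ∀ W : ℝ, 0 < W → b ≤ ENNReal.ofReal W → a ≤ C * ENNReal.ofReal W) : a ≤ C * b := by
  rw [mul_comm, ← ENNReal.div_le_iff hC0 hC]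
  refine le_of_forall_gt_imp_ge_of_dense fun w hbw => ?_
  rcases eq_or_ne w ⊤ with rfl | hw
  · exact le_top
  have := h w.toReal (ENNReal.toReal_pos (pos_of_gt hbw).ne' hw)
    (by rw [ENNReal.ofReal_toReal hw]; exact hbw.le)
  rwa [ENNReal.div_le_iff hC0 hC, mul_comm, ← ENNReal.ofReal_toReal hw]

theorem stmt_8_general (d : ℕ) (p r : ℝ) (hp : 0 < p)
    (φ : ℕ → ℝ) (hφ1 : φ 0 = 1)
    (hr : r = sSup {q : ℝ | 0 < q ∧ Gp d q φ}) (hpr : p < r) :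
    ∃ C : ℝ≥0∞, C < ⊤ ∧ ∀ lam : (Fin d → ℤ) → ℂ,
      Tendsto lam cofinite (nhds 0) →
      mNorm d p φ lam ≤ C * weakNorm d r lam := by
  have hr0 : 0 < r := hp.trans hpr
  have hφ (j : ℕ) : φ j ≤ 2 ^ ((j : ℝ) * d / r) := by
    have := ((hr ▸ Gp_sSup (hr ▸ hr0)).2 0 j j.zero_le).2
    simpa [hφ1] using this
  have hC : layerConst p r ≠ ⊤ := layerConst_ne_top hpr
  have hC0 : layerConst p r ^ (1 / p) ≠ 0 :=
    (ENNReal.rpow_pos (one_pos.trans_le le_self_add) hC).ne'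
  refine ⟨layerConst p r ^ (1 / p), ENNReal.rpow_lt_top_of_nonneg (by positivity) hC,
    fun lam hlam => ?_⟩
  refine ENNReal.le_mul_of_forall_pos_le_ofReal hC0
    (ENNReal.rpow_ne_top_of_nonneg (by positivity) hC) fun W hW0 hW => iSup₂_le fun j m => ?_
  exact ofReal_mul_two_rpow_mul_localSum_le hlam hp hr0 (hφ j) hW0 hW m

theorem stmt_8 (d : ℕ) (hd : 0 < d) (p r : ℝ) (hp : 0 < p)
    (φ : ℕ → ℝ) (hGp : Gp d p φ) (hφ1 : φ 0 = 1)
    (hunb : ∀ C : ℝ, ∃ k, C < φ k)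
    (hr : r = sSup {q : ℝ | 0 < q ∧ Gp d q φ}) (hpr : p < r) :
    ∃ C : ℝ≥0∞, C < ⊤ ∧ ∀ lam : (Fin d → ℤ) → ℂ,
      Tendsto lam cofinite (nhds 0) →
      mNorm d p φ lam ≤ C * weakNorm d r lam :=
  stmt_8_general d p r hp φ hφ1 hr hpr

end
end

section
/- Let 0<p<∞ and φ∈𝒢_p(𝔻) with sup_k φ(2^k)=∞ and lim_{k→∞} 2^{−kd/p}φ(2^k) = 0. Then there exists a sequence λ∈c₀(ℤ^d) (tending to zero) that does not belong to m_{φ,p}(ℤ^d), and there exists a 0–1 valued sequence μ∈m_{φ,p}(ℤ^d) that is not in c(ℤ^d). Hence m_{φ,p}(ℤ^d) and c₀(ℤ^d) (resp. c(ℤ^d)) are incomparable. -/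
/-!
For the first sequence take `λ_k = φ(2^j)^{-1/2}`, where `2^j` is the dyadic size of `‖k‖_∞`.
It tends to zero because `φ` is nondecreasing and unbounded, while it is at least
`φ(2^j)^{-1/2}` on the cube `[0, 2^j)^d`, so that cube alone contributes `φ(2^j)^{1/2}` to the
Morrey norm.

For the second, put ones at the points `a_n e_1` with gaps `a_{n+1} - a_n = 2^{j_n}`, where
`w_j = (2^{-jd/p} φ(2^j))^p` is nonincreasing, tends to zero, and `(n + 1) w_{j_n} ≤ 1`.
If a cube of side `2^j` contains two of these points `n < n'`, then `2^{j_n} < 2^j`, hence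
`(n + 1) w_j ≤ 1`. So the cube contains at most `1/w_j + 1` points and contributes at most
`(w_j (1/w_j + 1))^{1/p} ≤ (1 + w_0)^{1/p}`. The sequence is `1` infinitely often and `0`
infinitely often, so it has no limit.
-/

open ENNReal Filter

noncomputable section

open Topology

section Cubes

variable {d : ℕ}

def cubeFinset (d j : ℕ) (m : Fin d → ℤ) : Finset (Fin d → ℤ) :=
  Fintype.piFinset fun i => Finset.Ico (2 ^ j * m i) (2 ^ j * (m i + 1))

theorem mem_cubeFinset {j : ℕ} {m k : Fin d → ℤ} : k ∈ cubeFinset d j m ↔ inCube d j m k := by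
  simp [cubeFinset, inCube]

theorem card_cubeFinset (j : ℕ) (m : Fin d → ℤ) : (cubeFinset d j m).card = 2 ^ (j * d) := by
  simp only [cubeFinset, Fintype.card_piFinset, Int.card_Ico, mul_add, mul_one,
    add_sub_cancel_left, Finset.prod_const, Finset.card_univ, Fintype.card_fin, pow_mul]
  norm_cast

theorem tsum_inCube_eq_sum {j : ℕ} {m : Fin d → ℤ} (f : (Fin d → ℤ) → ℝ≥0∞) :
    ∑' k : {k // inCube d j m k}, f k = ∑ k ∈ cubeFinset d j m, f k := by
  rw [← Finset.tsum_subtype]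
  exact (Equiv.subtypeEquivRight fun _ => mem_cubeFinset.symm).tsum_eq
    (fun k : cubeFinset d j m => f k)

theorem inCube.sub_lt {j : ℕ} {m k k' : Fin d → ℤ} (hk : inCube d j m k)
    (hk' : inCube d j m k') (i : Fin d) : k' i - k i < 2 ^ j := by
  have := hk i; have := hk' i
  linarith

end Cubes

section MorreyNorm

variable {d : ℕ} {p : ℝ} {φ : ℕ → ℝ}

def scaledPhi (d : ℕ) (p : ℝ) (φ : ℕ → ℝ) (j : ℕ) : ℝ :=
  φ j * (2 : ℝ) ^ (-((j : ℝ) * d) / p)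

theorem scaledPhi_nonneg {j : ℕ} (hφ : 0 ≤ φ j) : 0 ≤ scaledPhi d p φ j := by
  unfold scaledPhi; positivity

theorem ofReal_scaledPhi {j : ℕ} (hφ : 0 ≤ φ j) :
    ENNReal.ofReal (scaledPhi d p φ j) = ENNReal.ofReal (φ j) * 2 ^ (-((j : ℝ) * d) / p) := by
  rw [scaledPhi, ENNReal.ofReal_mul hφ, ← ENNReal.ofReal_rpow_of_pos two_pos, ENNReal.ofReal_ofNat]

theorem le_localSum_of_le {lam : (Fin d → ℤ) → ℂ} (hp : 0 < p) {c : ℝ} {j : ℕ}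
    {m : Fin d → ℤ} (h : ∀ k, inCube d j m k → c ≤ ‖lam k‖) :
    2 ^ ((j : ℝ) * d / p) * ENNReal.ofReal c ≤ localSum d p j m lam := by
  have hsum : 2 ^ (j * d) * ENNReal.ofReal c ^ p ≤
      ∑' k : {k // inCube d j m k}, ENNReal.ofReal ‖lam k‖ ^ p := by
    rw [tsum_inCube_eq_sum fun k => ENNReal.ofReal ‖lam k‖ ^ p]
    calc 2 ^ (j * d) * ENNReal.ofReal c ^ p = ∑ k ∈ cubeFinset d j m, ENNReal.ofReal c ^ p := by
          simp [card_cubeFinset]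
      _ ≤ _ := Finset.sum_le_sum fun k hk => by
          gcongr
          exact h k (mem_cubeFinset.1 hk)
  calc 2 ^ ((j : ℝ) * d / p) * ENNReal.ofReal c
      = (2 ^ (j * d) * ENNReal.ofReal c ^ p) ^ (1 / p) := by
        rw [ENNReal.mul_rpow_of_nonneg _ _ (by positivity), ← ENNReal.rpow_natCast,
          ← ENNReal.rpow_mul, ← ENNReal.rpow_mul, mul_one_div_cancel hp.ne', ENNReal.rpow_one]
        push_cast
        ring_nf
    _ ≤ localSum d p j m lam := ENNReal.rpow_le_rpow hsum (by positivity)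

theorem ofReal_mul_le_mNorm {lam : (Fin d → ℤ) → ℂ} (hp : 0 < p) {c : ℝ} (hc : 0 ≤ c)
    {j : ℕ} {m : Fin d → ℤ} (h : ∀ k, inCube d j m k → c ≤ ‖lam k‖) :
    ENNReal.ofReal (φ j * c) ≤ mNorm d p φ lam := by
  have hcancel : (2 : ℝ≥0∞) ^ (-((j : ℝ) * d) / p) * 2 ^ ((j : ℝ) * d / p) = 1 := by
    rw [← ENNReal.rpow_add _ _ two_ne_zero ENNReal.ofNat_ne_top, neg_div, neg_add_cancel,
      ENNReal.rpow_zero]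
  calc ENNReal.ofReal (φ j * c)
      = ENNReal.ofReal (φ j) * 2 ^ (-((j : ℝ) * d) / p) *
          (2 ^ ((j : ℝ) * d / p) * ENNReal.ofReal c) := by
        rw [ENNReal.ofReal_mul' hc, mul_assoc, ← mul_assoc (2 ^ _), hcancel, one_mul]
    _ ≤ ENNReal.ofReal (φ j) * 2 ^ (-((j : ℝ) * d) / p) * localSum d p j m lam := by
        gcongr
        exact le_localSum_of_le hp h
    _ ≤ mNorm d p φ lam :=
        le_iSup₂ (f := fun j m => ENNReal.ofReal (φ j) * 2 ^ (-((j : ℝ) * d) / p) *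
          localSum d p j m lam) j m

theorem mNorm_le_of_forall {lam : (Fin d → ℤ) → ℂ} (hp : 0 < p) (hφ : ∀ j, 0 ≤ φ j)
    {C : ℝ≥0∞} (h : ∀ j m, ENNReal.ofReal (scaledPhi d p φ j ^ p) *
      ∑' k : {k // inCube d j m k}, ENNReal.ofReal ‖lam k‖ ^ p ≤ C) :
    mNorm d p φ lam ≤ C ^ (1 / p) := by
  refine iSup₂_le fun j m => ?_
  have hs : ENNReal.ofReal (scaledPhi d p φ j) =
      ENNReal.ofReal (scaledPhi d p φ j ^ p) ^ (1 / p) := by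
    rw [← ENNReal.ofReal_rpow_of_nonneg (scaledPhi_nonneg (hφ j)) hp.le, ← ENNReal.rpow_mul,
      mul_one_div_cancel hp.ne', ENNReal.rpow_one]
  rw [← ofReal_scaledPhi (hφ j), hs, localSum, ← ENNReal.mul_rpow_of_nonneg _ _ (by positivity)]
  exact ENNReal.rpow_le_rpow (h j m) (by positivity)

theorem scaledPhi_antitone (hGp : Gp d p φ) : Antitone (scaledPhi d p φ) := by
  intro j k hjk
  calc scaledPhi d p φ k
      ≤ φ j * 2 ^ (((k : ℝ) - j) * d / p) * (2 : ℝ) ^ (-((k : ℝ) * d) / p) := by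
        unfold scaledPhi
        gcongr
        exact (hGp.2 j k hjk).2
    _ = scaledPhi d p φ j := by
        rw [scaledPhi, mul_assoc, ← Real.rpow_add two_pos]
        congr 2
        ring

end MorreyNorm

section NotMorrey

variable {d : ℕ} {p : ℝ} {φ : ℕ → ℝ}

def dyadicScale (k : Fin d → ℤ) : ℕ := Nat.clog 2 ⌈‖k‖⌉₊

theorem tendsto_dyadicScale_cofinite : Tendsto (dyadicScale (d := d)) cofinite atTop := by
  have hclog : Tendsto (Nat.clog 2) atTop atTop :=
    tendsto_atTop_atTop_of_monotone (fun _ _ => Nat.clog_mono_right 2)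
      fun b => ⟨2 ^ b, (Nat.clog_pow 2 b one_lt_two).ge⟩
  have hnorm : Tendsto (‖·‖ : (Fin d → ℤ) → ℝ) cofinite atTop := by
    rw [← cocompact_eq_cofinite (Fin d → ℤ)]
    exact tendsto_norm_cocompact_atTop
  exact hclog.comp (tendsto_nat_ceil_atTop.comp hnorm)

theorem dyadicScale_le_of_inCube_zero {j : ℕ} {k : Fin d → ℤ} (hk : inCube d j 0 k) :
    dyadicScale k ≤ j := by
  refine Nat.clog_le_of_le_pow (Nat.ceil_le.2 ((pi_norm_le_iff_of_nonneg (by positivity)).2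
    fun i => ?_))
  have := hk i
  simp only [Pi.zero_apply, mul_zero, zero_add, mul_one] at this
  rw [Int.norm_eq_abs, abs_of_nonneg (by exact_mod_cast this.1)]
  exact_mod_cast this.2.le

def invSqrtPhiAtScale (φ : ℕ → ℝ) (k : Fin d → ℤ) : ℂ := ((√(φ (dyadicScale k)))⁻¹ : ℝ)

theorem tendsto_invSqrtPhiAtScale (hφ : Monotone φ) (hunb : ∀ C : ℝ, ∃ k, C < φ k) :
    Tendsto (invSqrtPhiAtScale (d := d) φ) cofinite (𝓝 0) := by
  have hφ_top : Tendsto φ atTop atTop :=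
    tendsto_atTop_atTop_of_monotone hφ fun C => (hunb C).imp fun _ => le_of_lt
  have h := tendsto_inv_atTop_zero.comp (Real.tendsto_sqrt_atTop.comp
    (hφ_top.comp (tendsto_dyadicScale_cofinite (d := d))))
  rw [← Complex.ofReal_zero]
  exact (Complex.continuous_ofReal.tendsto 0).comp h

theorem mNorm_invSqrtPhiAtScale_eq_top (hp : 0 < p) (hpos : ∀ k, 0 < φ k) (hφ : Monotone φ)
    (hunb : ∀ C : ℝ, ∃ k, C < φ k) : mNorm d p φ (invSqrtPhiAtScale φ) = ⊤ := by
  have hsqrt_le : ∀ j, ENNReal.ofReal √(φ j) ≤ mNorm d p φ (invSqrtPhiAtScale φ) := by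
    intro j
    rw [← Real.div_sqrt, div_eq_mul_inv]
    refine ofReal_mul_le_mNorm hp (by positivity) (m := 0) fun k hk => ?_
    rw [invSqrtPhiAtScale, Complex.norm_real, Real.norm_of_nonneg (by positivity)]
    gcongr
    · exact Real.sqrt_pos.2 (hpos _)
    · exact hφ (dyadicScale_le_of_inCube_zero hk)
  refine ENNReal.eq_top_of_forall_nnreal_le fun r => ?_
  obtain ⟨j, hj⟩ := hunb (r ^ 2)
  calc (r : ℝ≥0∞) = ENNReal.ofReal r := (ENNReal.ofReal_coe_nnreal).symm
    _ ≤ ENNReal.ofReal √(φ j) :=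
        ENNReal.ofReal_le_ofReal (Real.le_sqrt_of_sq_le hj.le)
    _ ≤ _ := hsqrt_le j

end NotMorrey

section Sparse

variable {d : ℕ} {p : ℝ} {φ : ℕ → ℝ}

def axisPoint (d : ℕ) (x : ℤ) : Fin d → ℤ := fun i => if i.val = 0 then x else 0

theorem axisPoint_injective (hd : 0 < d) : Function.Injective (axisPoint d) := fun x y h => by
  simpa [axisPoint] using congrFun h ⟨0, hd⟩

def gapSum (J : ℕ → ℕ) (n : ℕ) : ℤ := ∑ i ∈ Finset.range n, 2 ^ J i

theorem gapSum_nonneg (J : ℕ → ℕ) (n : ℕ) : 0 ≤ gapSum J n :=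
  Finset.sum_nonneg fun _ _ => by positivity

theorem pow_le_gapSum_sub (J : ℕ → ℕ) {n n' : ℕ} (h : n < n') :
    2 ^ J n ≤ gapSum J n' - gapSum J n := by
  rw [gapSum, gapSum, ← Finset.sum_Ico_eq_sub _ h.le]
  exact Finset.single_le_sum (f := fun i => (2 : ℤ) ^ J i) (fun _ _ => by positivity)
    (Finset.mem_Ico.2 ⟨le_rfl, h⟩)

theorem gapSum_strictMono (J : ℕ → ℕ) : StrictMono (gapSum J) := fun n n' h => by
  have := pow_le_gapSum_sub J h
  have : (0 : ℤ) < 2 ^ J n := by positivity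
  linarith

theorem lt_of_inCube_axisPoint_gapSum (hd : 0 < d) {J : ℕ → ℕ} {j : ℕ} {m : Fin d → ℤ}
    {n n' : ℕ} (hn : inCube d j m (axisPoint d (gapSum J n)))
    (hn' : inCube d j m (axisPoint d (gapSum J n'))) (h : n < n') : J n < j := by
  have hlt := hn.sub_lt hn' ⟨0, hd⟩
  simp only [axisPoint, if_true] at hlt
  exact (pow_lt_pow_iff_right₀ (one_lt_two : (1 : ℤ) < 2)).1 ((pow_le_gapSum_sub J h).trans_lt hlt)

theorem Set.encard_le_of_forall_lt {S : Set ℕ} {K : ℕ}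
    (h : ∀ n ∈ S, ∀ n' ∈ S, n < n' → n < K) : S.encard ≤ K + 1 := by
  have htail : (S \ Set.Iio K).encard ≤ 1 := by
    refine Set.encard_le_one_iff.2 fun a b ha hb => ?_
    rcases lt_trichotomy a b with hab | hab | hab
    · exact absurd (h a ha.1 b hb.1 hab) ha.2
    · exact hab
    · exact absurd (h b hb.1 a ha.1 hab) hb.2
  have hK : (Set.Iio K).encard = K := by
    rw [← Finset.coe_range, Set.encard_coe_eq_coe_finsetCard, Finset.card_range]
  calc S.encard ≤ (Set.Iio K ∪ S \ Set.Iio K).encard :=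
        Set.encard_mono (by rw [Set.union_sdiff_self]; exact Set.subset_union_right)
    _ ≤ (Set.Iio K).encard + (S \ Set.Iio K).encard := Set.encard_union_le _ _
    _ ≤ K + 1 := by rw [hK]; gcongr

def sparseSet (d : ℕ) (J : ℕ → ℕ) : Set (Fin d → ℤ) :=
  Set.range fun n => axisPoint d (gapSum J n)

theorem tsum_inCube_indicator_sparseSet (hd : 0 < d) (hp : 0 < p) (J : ℕ → ℕ) (j : ℕ)
    (m : Fin d → ℤ) :
    ∑' k : {k // inCube d j m k},
        ENNReal.ofReal ‖(sparseSet d J).indicator (1 : (Fin d → ℤ) → ℂ) k‖ ^ p =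
      {n | inCube d j m (axisPoint d (gapSum J n))}.encard := by
  have hinj : Function.Injective fun n => axisPoint d (gapSum J n) :=
    (axisPoint_injective hd).comp (gapSum_strictMono J).injective
  have hterm : ∀ k, ENNReal.ofReal ‖(sparseSet d J).indicator (1 : (Fin d → ℤ) → ℂ) k‖ ^ p =
      (sparseSet d J).indicator 1 k := by
    intro k
    by_cases hk : k ∈ sparseSet d J <;> simp [hk, hp]
  have himage : {k | inCube d j m k} ∩ sparseSet d J =
      (fun n => axisPoint d (gapSum J n)) '' {n | inCube d j m (axisPoint d (gapSum J n))} := by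
    ext k
    constructor
    · rintro ⟨hk, n, rfl⟩
      exact ⟨n, hk, rfl⟩
    · rintro ⟨n, hn, rfl⟩
      exact ⟨hn, n, rfl⟩
  simp_rw [hterm]
  refine (tsum_subtype {k | inCube d j m k} ((sparseSet d J).indicator 1)).trans ?_
  rw [Set.indicator_indicator, ← tsum_subtype, Pi.one_def, ENNReal.tsum_set_one, himage,
    hinj.encard_image]

theorem encard_inCube_axisPoint_gapSum_le (hd : 0 < d) {J : ℕ → ℕ} {u : ℕ → ℝ}
    (hu : Antitone u) (hJ : ∀ n, (n + 1) * u (J n) ≤ 1) {j : ℕ} (huj : 0 < u j)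
    (m : Fin d → ℤ) :
    {n | inCube d j m (axisPoint d (gapSum J n))}.encard ≤ ⌊(u j)⁻¹⌋₊ + 1 := by
  refine Set.encard_le_of_forall_lt fun n hn n' hn' h => ?_
  have hJn : u j ≤ u (J n) := hu (lt_of_inCube_axisPoint_gapSum hd hn hn' h).le
  rw [Nat.lt_iff_add_one_le, Nat.le_floor_iff (by positivity), ← one_div, le_div_iff₀ huj]
  push_cast
  exact (mul_le_mul_of_nonneg_left hJn (by positivity)).trans (hJ n)

theorem mul_floor_inv_add_one_le {u : ℝ} (hu : 0 ≤ u) : u * (⌊u⁻¹⌋₊ + 1) ≤ 1 + u := by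
  have hfloor := mul_le_mul_of_nonneg_left (Nat.floor_le (inv_nonneg.2 hu)) hu
  have hinv : u * u⁻¹ ≤ 1 := mul_inv_le_one
  linarith

theorem mNorm_indicator_sparseSet_lt_top (hd : 0 < d) (hp : 0 < p) (hGp : Gp d p φ)
    {J : ℕ → ℕ} (hJ : ∀ n, (n + 1) * scaledPhi d p φ (J n) ^ p ≤ 1) :
    mNorm d p φ ((sparseSet d J).indicator 1) < ⊤ := by
  set u : ℕ → ℝ := fun j => scaledPhi d p φ j ^ p
  have hu_pos : ∀ j, 0 < u j := fun j => by
    have := hGp.1 j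
    unfold u scaledPhi
    positivity
  have hu_anti : Antitone u := fun j k hjk =>
    Real.rpow_le_rpow (scaledPhi_nonneg (hGp.1 k).le) (scaledPhi_antitone hGp hjk) hp.le
  refine (mNorm_le_of_forall hp (fun j => (hGp.1 j).le) (C := ENNReal.ofReal (1 + u 0))
    fun j m => ?_).trans_lt (ENNReal.rpow_lt_top_of_nonneg (by positivity) ENNReal.ofReal_ne_top)
  rw [tsum_inCube_indicator_sparseSet hd hp]
  calc ENNReal.ofReal (u j) * {n | inCube d j m (axisPoint d (gapSum J n))}.encard
      ≤ ENNReal.ofReal (u j) * ENNReal.ofReal (⌊(u j)⁻¹⌋₊ + 1) := by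
        gcongr
        refine (ENat.toENNReal_le.2
          (encard_inCube_axisPoint_gapSum_le hd hu_anti hJ (hu_pos j) m)).trans_eq ?_
        push_cast
        rw [ENNReal.ofReal_add (by positivity) zero_le_one, ENNReal.ofReal_natCast,
          ENNReal.ofReal_one]
    _ ≤ ENNReal.ofReal (1 + u 0) := by
        rw [← ENNReal.ofReal_mul (hu_pos j).le]
        exact ENNReal.ofReal_le_ofReal ((mul_floor_inv_add_one_le (hu_pos j).le).trans
          (by linarith [hu_anti (Nat.zero_le j)]))

theorem not_exists_tendsto_indicator_one {α M : Type*} [Zero M] [One M] [NeZero (1 : M)]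
    [TopologicalSpace M] [T2Space M] {A : Set α} (hA : A.Infinite) (hAc : Aᶜ.Infinite) :
    ¬ ∃ c : M, Tendsto (A.indicator 1) cofinite (𝓝 c) := by
  rintro ⟨c, hc⟩
  have hlim : ∀ (B : Set α) (b : M), B.Infinite → Set.EqOn (A.indicator 1) (fun _ => b) B →
      c = b := by
    intro B b hB hb
    have : (cofinite ⊓ 𝓟 B).NeBot := frequently_iff_neBot.1 (frequently_cofinite_iff_infinite.2 hB)
    exact tendsto_nhds_unique (hc.mono_left inf_le_left)
      (tendsto_const_nhds.congr' (mem_inf_of_right (mem_principal.2 fun x hx => (hb hx).symm)))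
  exact one_ne_zero ((hlim A 1 hA fun x hx => Set.indicator_of_mem hx 1).symm.trans
    (hlim Aᶜ 0 hAc fun x hx => Set.indicator_of_notMem hx 1))

theorem sparseSet_infinite (hd : 0 < d) (J : ℕ → ℕ) : (sparseSet d J).Infinite :=
  Set.infinite_range_of_injective ((axisPoint_injective hd).comp (gapSum_strictMono J).injective)

theorem compl_sparseSet_infinite (hd : 0 < d) (J : ℕ → ℕ) : (sparseSet d J)ᶜ.Infinite := by
  refine ((Set.Iio_infinite 0).image (axisPoint_injective hd).injOn).mono ?_
  rintro _ ⟨x, hx, rfl⟩ ⟨n, hn⟩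
  have := gapSum_nonneg J n
  rw [axisPoint_injective hd hn] at this
  exact absurd hx (not_lt.2 this)

end Sparse

theorem stmt_10 (d : ℕ) (hd : 0 < d) (p : ℝ) (hp : 0 < p)
    (φ : ℕ → ℝ) (hGp : Gp d p φ) (hunb : ∀ C : ℝ, ∃ k, C < φ k)
    (hlim : Tendsto (fun k : ℕ => φ k * (2 : ℝ) ^ (-((k : ℝ) * d) / p))
      atTop (nhds 0)) :
    (∃ lam : (Fin d → ℤ) → ℂ, Tendsto lam cofinite (nhds 0) ∧
      mNorm d p φ lam = ⊤) ∧
    (∃ mu : (Fin d → ℤ) → ℂ, (∀ k, mu k = 0 ∨ mu k = 1) ∧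
      mNorm d p φ mu < ⊤ ∧ ¬ ∃ c : ℂ, Tendsto mu cofinite (nhds c)) := by
  have hmono : Monotone φ := fun j k hjk => (hGp.2 j k hjk).1
  have hweight : Tendsto (fun j => scaledPhi d p φ j ^ p) atTop (𝓝 0) := by
    rw [← Real.zero_rpow hp.ne']
    exact hlim.rpow_const (Or.inr hp.le)
  have hsmall : ∀ n : ℕ, ∃ j, (n + 1) * scaledPhi d p φ j ^ p ≤ 1 := fun n =>
    (hweight.eventually (ge_mem_nhds (show (0 : ℝ) < 1 / (n + 1) by positivity))).exists.imp
      fun j hj => by rwa [le_div_iff₀ (by positivity), mul_comm] at hj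
  choose J hJ using hsmall
  exact ⟨⟨invSqrtPhiAtScale φ, tendsto_invSqrtPhiAtScale hmono hunb,
      mNorm_invSqrtPhiAtScale_eq_top hp hGp.1 hmono hunb⟩,
    ⟨(sparseSet d J).indicator 1, fun k => Set.indicator_eq_zero_or_self _ _ k,
      mNorm_indicator_sparseSet_lt_top hd hp hGp hJ,
      not_exists_tendsto_indicator_one (sparseSet_infinite hd J) (compl_sparseSet_infinite hd J)⟩⟩
end
end

section
/- Let 0<p_i<∞, φ_i∈𝒢_{p_i}(𝔻) with φ_i(1)=1 and sup_k φ_i(2^k)=∞ for i=1,2, and set ϱ = min(1, p₁/p₂). Then the embedding m_{φ₁,p₁}(ℤ^d) ↪ m_{φ₂,p₂}(ℤ^d) is continuous if, and only if, sup_{j∈ℕ₀} φ₂(2^j)/φ₁(2^j)^ϱ < ∞. Moreover, the embedding is never compact. -/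
open ENNReal Filter

noncomputable section

/-!
For `p₂ ≤ p₁` the embedding is Hölder's inequality on each cube `Q_{-j,m}`. For `p₁ ≤ p₂`,
with `ϱ = p₁/p₂`, one interpolates `ℓ^{p₂}(Q) ⊂ ℓ^{p₁}(Q) ∩ ℓ^∞`:
`‖λ‖_{ℓ^{p₂}(Q)} ≤ ‖λ‖_∞^{1-ϱ} ‖λ‖_{ℓ^{p₁}(Q)}^ϱ`, and `‖λ‖_∞ ≤ ‖λ|m_{φ₁,p₁}‖` because
`φ₁(1) = 1` (cubes of level `0`).

Conversely, the indicator of `2^a ℤ^d ∩ Q_{-J,0}` has `m_{φ,p}`-quasi-norm at least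
`φ(2^J) 2^{-ad/p}` and at most `max(1, φ(2^J) 2^{-ad/p})`. Taking `a = 0` gives `φ₂ ≲ φ₁`;
taking `2^{ad} ≈ φ₁(2^J)^{p₁}` gives `φ₂ ≲ φ₁^{p₁/p₂}`.

The unit sequences `e_k` are bounded in `m_{φ₁,p₁}` and pairwise at distance `≥ 1` in
`m_{φ₂,p₂}`, so the embedding is never compact.
-/

namespace Morrey

variable {d : ℕ} {p : ℝ} {φ : ℕ → ℝ} {lam : (Fin d → ℤ) → ℂ}

lemma two_rpow_mul_two_rpow (x y : ℝ) : (2 : ℝ≥0∞) ^ x * 2 ^ y = 2 ^ (x + y) :=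
  (ENNReal.rpow_add x y two_ne_zero ENNReal.ofNat_ne_top).symm

lemma ofReal_two_rpow (x : ℝ) : ENNReal.ofReal ((2 : ℝ) ^ x) = 2 ^ x := by
  rw [← ENNReal.ofReal_rpow_of_pos two_pos, ENNReal.ofReal_ofNat]

lemma ofReal_mul_two_rpow_neg_le_one {x t p : ℝ} (h : x ≤ 2 ^ (t / p)) :
    ENNReal.ofReal x * 2 ^ (-t / p) ≤ 1 :=
  calc ENNReal.ofReal x * 2 ^ (-t / p) ≤ 2 ^ (t / p) * 2 ^ (-t / p) := by
        gcongr; exact (ENNReal.ofReal_le_ofReal h).trans_eq (ofReal_two_rpow _)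
    _ = 1 := by rw [two_rpow_mul_two_rpow, ← add_div, add_neg_cancel, zero_div, ENNReal.rpow_zero]

lemma le_mul_two_rpow_of_mul_two_rpow_neg_le {x y : ℝ≥0∞} {t p : ℝ} (h : x * 2 ^ (-t / p) ≤ y) :
    x ≤ y * 2 ^ (t / p) :=
  calc x = x * 2 ^ (-t / p) * 2 ^ (t / p) := by
        rw [mul_assoc, two_rpow_mul_two_rpow, ← add_div, neg_add_cancel, zero_div,
          ENNReal.rpow_zero, mul_one]
    _ ≤ y * 2 ^ (t / p) := by gcongr

lemma le_toReal_mul_of_ofReal_le {a b : ℝ} {C : ℝ≥0∞} (hC : C ≠ ⊤) (hb : 0 ≤ b)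
    (h : ENNReal.ofReal a ≤ C * ENNReal.ofReal b) : a ≤ C.toReal * b := by
  rwa [← ENNReal.ofReal_toReal hC, ← ENNReal.ofReal_mul ENNReal.toReal_nonneg,
    ENNReal.ofReal_le_ofReal_iff (by positivity)] at h

lemma tsum_le_card_of_le_one {ι κ : Type*} [Fintype κ] {f : ι → ℝ≥0∞} (hf : ∀ i, f i ≤ 1)
    (emb : Function.support f → κ) (hemb : Function.Injective emb) :
    ∑' i, f i ≤ Fintype.card κ := by
  rw [← tsum_subtype_eq_of_support_subset subset_rfl]
  calc ∑' i : Function.support f, f i ≤ ∑' _ : Function.support f, 1 :=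
        ENNReal.tsum_le_tsum fun i => hf i
    _ ≤ ∑' _ : κ, 1 := ENNReal.tsum_comp_le_tsum_of_injective hemb _
    _ = Fintype.card κ := by simp

lemma exists_pow_le_mul {b x : ℝ} (hb : 1 ≤ b) (hx : 1 ≤ x) {J : ℕ} (hJ : x ≤ b ^ J) :
    ∃ a ≤ J, x ≤ b ^ a ∧ b ^ a ≤ b * x := by
  classical
  have hex : ∃ n, x ≤ b ^ n := ⟨J, hJ⟩
  refine ⟨Nat.find hex, Nat.find_min' hex hJ, Nat.find_spec hex, ?_⟩
  rcases h : Nat.find hex with _ | n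
  · simpa using one_le_mul_of_one_le_of_one_le hb hx
  · have hlt : b ^ n < x := not_le.1 (Nat.find_min hex (h ▸ n.lt_succ_self))
    rw [pow_succ']
    exact mul_le_mul_of_nonneg_left hlt.le (by linarith)

namespace Gp

lemma one_le (hG : Gp d p φ) (hφ0 : φ 0 = 1) (j : ℕ) : 1 ≤ φ j :=
  hφ0 ▸ (hG.2 0 j j.zero_le).1

lemma le_two_rpow (hG : Gp d p φ) (hφ0 : φ 0 = 1) (j : ℕ) : φ j ≤ 2 ^ ((j : ℝ) * d / p) := by
  simpa [hφ0] using (hG.2 0 j j.zero_le).2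

lemma weight_le_one (hG : Gp d p φ) (hφ0 : φ 0 = 1) (j : ℕ) :
    ENNReal.ofReal (φ j) * 2 ^ (-((j : ℝ) * d) / p) ≤ 1 :=
  ofReal_mul_two_rpow_neg_le_one (le_two_rpow hG hφ0 j)

lemma weight_mul_two_rpow_min_le (hG : Gp d p φ) (j J : ℕ) :
    ENNReal.ofReal (φ j) * 2 ^ (-((j : ℝ) * d) / p) * 2 ^ ((min j J : ℕ) * (d : ℝ) / p)
      ≤ ENNReal.ofReal (φ J) := by
  rcases le_total j J with h | h
  · rw [min_eq_left h, mul_assoc, two_rpow_mul_two_rpow, ← add_div, neg_add_cancel, zero_div,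
      ENNReal.rpow_zero, mul_one]
    exact ENNReal.ofReal_le_ofReal (hG.2 j J h).1
  · calc ENNReal.ofReal (φ j) * 2 ^ (-((j : ℝ) * d) / p) * 2 ^ ((min j J : ℕ) * (d : ℝ) / p)
        ≤ ENNReal.ofReal (φ J * 2 ^ (((j : ℝ) - J) * d / p)) * 2 ^ (-((j : ℝ) * d) / p)
            * 2 ^ ((J : ℝ) * d / p) := by
          rw [min_eq_right h]; gcongr; exact (hG.2 J j h).2
      _ = ENNReal.ofReal (φ J) := by
          rw [ENNReal.ofReal_mul (hG.1 J).le, ofReal_two_rpow, mul_assoc, mul_assoc,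
            two_rpow_mul_two_rpow, two_rpow_mul_two_rpow,
            show ((j : ℝ) - J) * d / p + (-((j : ℝ) * d) / p + J * d / p) = 0 by ring,
            ENNReal.rpow_zero, mul_one]

end Gp

section Cubes

variable {j a : ℕ} {m k k' : Fin d → ℤ}

lemma inCube_iff_ediv : inCube d j m k ↔ ∀ i, k i / 2 ^ j = m i := by
  refine forall_congr' fun i => ?_
  rw [Int.ediv_eq_iff_of_pos (by positivity)]
  constructor <;> rintro ⟨h1, h2⟩ <;> constructor <;> linarith

lemma inCube_zero_iff : inCube d 0 m k ↔ k = m := by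
  simp [inCube_iff_ediv, funext_iff]

lemma inCube_ediv_two_pow (h : inCube d j m k) (ha : a ≤ j) :
    inCube d (j - a) m (fun i => k i / 2 ^ a) := by
  rw [inCube_iff_ediv] at h ⊢
  intro i
  rw [Int.ediv_ediv_of_nonneg (by positivity), ← pow_add, Nat.add_sub_cancel' ha, h i]

lemma eq_of_ediv_two_pow_eq (hdvd : ∀ i, 2 ^ a ∣ k i)
    (hdvd' : ∀ i, 2 ^ a ∣ k' i) (h : ∀ i, k i / 2 ^ a = k' i / 2 ^ a) : k = k' :=
  funext fun i => by
    rw [← Int.mul_ediv_cancel' (hdvd i), ← Int.mul_ediv_cancel' (hdvd' i), h i]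

lemma eq_of_inCube_of_dvd (hk : inCube d j m k) (hk' : inCube d j m k') (hja : j ≤ a)
    (hdvd : ∀ i, 2 ^ a ∣ k i) (hdvd' : ∀ i, 2 ^ a ∣ k' i) : k = k' := by
  rw [inCube_iff_ediv] at hk hk'
  refine eq_of_ediv_two_pow_eq hdvd hdvd' fun i => ?_
  rw [← Nat.add_sub_cancel' hja, pow_add, ← Int.ediv_ediv_of_nonneg (by positivity),
    ← Int.ediv_ediv_of_nonneg (by positivity), hk i, hk' i]

lemma exists_inCube_min (j J : ℕ) (m m' : Fin d → ℤ) :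
    ∃ m'', ∀ k, inCube d j m k → inCube d J m' k → inCube d (min j J) m'' k := by
  rcases le_total j J with h | h
  · exact ⟨m, fun k hk _ => by rwa [min_eq_left h]⟩
  · exact ⟨m', fun k _ hk => by rwa [min_eq_right h]⟩

def cubeEquiv (d j : ℕ) (m : Fin d → ℤ) :
    {k : Fin d → ℤ // inCube d j m k} ≃ (Fin d → Fin (2 ^ j)) where
  toFun k i := ⟨(k.1 i - 2 ^ j * m i).toNat, by
    have := k.2 i
    have : ((2 ^ j : ℕ) : ℤ) = 2 ^ j := by push_cast; rfl
    rw [mul_add, mul_one] at *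
    omega⟩
  invFun v := ⟨fun i => 2 ^ j * m i + (v i : ℕ), fun i => by
    have := (v i).2
    have : ((2 ^ j : ℕ) : ℤ) = 2 ^ j := by push_cast; rfl
    dsimp only
    rw [mul_add, mul_one]
    omega⟩
  left_inv k := by
    ext i
    have := (k.2 i).1
    simp only
    omega
  right_inv v := by
    ext i
    simp

instance (j : ℕ) (m : Fin d → ℤ) : Fintype {k : Fin d → ℤ // inCube d j m k} :=
  Fintype.ofEquiv _ (cubeEquiv d j m).symm

lemma card_fun_fin_two_pow (n : ℕ) :
    (Fintype.card (Fin d → Fin (2 ^ n)) : ℝ≥0∞) = 2 ^ ((n : ℝ) * d) := by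
  rw [Fintype.card_fun, Fintype.card_fin, Fintype.card_fin, ← pow_mul, ← Nat.cast_mul,
    ENNReal.rpow_natCast]
  push_cast
  rfl

lemma card_cube (j : ℕ) (m : Fin d → ℤ) :
    (Fintype.card {k : Fin d → ℤ // inCube d j m k} : ℝ≥0∞) = 2 ^ ((j : ℝ) * d) := by
  rw [Fintype.card_congr (cubeEquiv d j m), card_fun_fin_two_pow]

end Cubes

section LocalSum

variable {j : ℕ} {m : Fin d → ℤ}

lemma localSum_zero (hp : 0 < p) (m : Fin d → ℤ) :
    localSum d p 0 m lam = ENNReal.ofReal ‖lam m‖ := by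
  rw [localSum, tsum_eq_single ⟨m, inCube_zero_iff.2 rfl⟩
      fun k hk => absurd (Subtype.ext (inCube_zero_iff.1 k.2)) hk,
    ← ENNReal.rpow_mul, mul_one_div_cancel hp.ne', ENNReal.rpow_one]

lemma localSum_le_card_rpow {κ : Type*} [Fintype κ] (hp : 0 < p) (hlam : ∀ k, ‖lam k‖ ≤ 1)
    (emb : {k : {k : Fin d → ℤ // inCube d j m k} // lam k ≠ 0} → κ)
    (hemb : Function.Injective emb) :
    localSum d p j m lam ≤ (Fintype.card κ : ℝ≥0∞) ^ (1 / p) := by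
  have hne : ∀ k : Function.support
      (fun k : {k // inCube d j m k} => ENNReal.ofReal ‖lam k.1‖ ^ p), lam k.1.1 ≠ 0 := by
    rintro ⟨k, hk⟩ h0
    simp [h0, hp] at hk
  refine ENNReal.rpow_le_rpow (tsum_le_card_of_le_one (fun k => ?_)
    (fun k => emb ⟨k.1, hne k⟩) fun x y h => ?_) (by positivity)
  · exact ENNReal.rpow_le_one (ENNReal.ofReal_le_one.2 (hlam k.1)) hp.le
  · exact Subtype.ext (by simpa using hemb h)

lemma card_rpow_le_localSum {κ : Type*} [Fintype κ] (hp : 0 < p)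
    (emb : κ → {k : Fin d → ℤ // inCube d j m k}) (hemb : Function.Injective emb)
    (hlam : ∀ v, ‖lam (emb v)‖ = 1) :
    (Fintype.card κ : ℝ≥0∞) ^ (1 / p) ≤ localSum d p j m lam := by
  refine ENNReal.rpow_le_rpow ?_ (by positivity)
  calc (Fintype.card κ : ℝ≥0∞) = ∑' v : κ, ENNReal.ofReal ‖lam (emb v)‖ ^ p := by simp [hlam]
    _ ≤ _ := ENNReal.tsum_comp_le_tsum_of_injective hemb fun k => ENNReal.ofReal ‖lam k.1‖ ^ p

lemma localSum_le_two_rpow_mul_localSum {q : ℝ} (hq : 0 < q) (hqp : q ≤ p) (j : ℕ)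
    (m : Fin d → ℤ) :
    localSum d q j m lam ≤ 2 ^ ((j : ℝ) * d * (1 / q - 1 / p)) * localSum d p j m lam := by
  have hp : 0 < p := hq.trans_le hqp
  have h := ENNReal.rpow_sum_le_const_mul_sum_rpow Finset.univ
    (fun k : {k // inCube d j m k} => ENNReal.ofReal ‖lam k.1‖ ^ q) ((one_le_div hq).2 hqp)
  simp only [← ENNReal.rpow_mul, mul_div_cancel₀ _ hq.ne', Finset.card_univ, card_cube] at h
  have h' := ENNReal.rpow_le_rpow h (one_div_nonneg.2 hp.le)
  rw [ENNReal.mul_rpow_of_nonneg _ _ (one_div_nonneg.2 hp.le), ← ENNReal.rpow_mul,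
    ← ENNReal.rpow_mul] at h'
  unfold localSum
  rw [tsum_fintype, tsum_fintype]
  convert h' using 3 <;> field_simp

lemma localSum_le_rpow_mul_localSum_rpow {q : ℝ} (hp : 0 < p) (hpq : p ≤ q) {M : ℝ≥0∞}
    (hM : ∀ k, ENNReal.ofReal ‖lam k‖ ≤ M) (j : ℕ) (m : Fin d → ℤ) :
    localSum d q j m lam ≤ M ^ (1 - p / q) * localSum d p j m lam ^ (p / q) := by
  have hq : 0 < q := hp.trans_le hpq
  have hterm : ∀ k : {k // inCube d j m k},
      ENNReal.ofReal ‖lam k.1‖ ^ q ≤ ENNReal.ofReal ‖lam k.1‖ ^ p * M ^ (q - p) := by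
    intro k
    rcases eq_or_ne (ENNReal.ofReal ‖lam k.1‖) 0 with h0 | h0
    · simp [h0, hq]
    · calc ENNReal.ofReal ‖lam k.1‖ ^ q
          = ENNReal.ofReal ‖lam k.1‖ ^ p * ENNReal.ofReal ‖lam k.1‖ ^ (q - p) := by
            rw [← ENNReal.rpow_add _ _ h0 ENNReal.ofReal_ne_top, add_sub_cancel]
        _ ≤ _ := by gcongr; exact hM k.1
  calc localSum d q j m lam
      ≤ ((∑' k : {k // inCube d j m k}, ENNReal.ofReal ‖lam k.1‖ ^ p) * M ^ (q - p)) ^ (1 / q) := by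
        rw [localSum, ← ENNReal.tsum_mul_right]
        gcongr with k
        exact hterm k
    _ = M ^ (1 - p / q) * localSum d p j m lam ^ (p / q) := by
        rw [localSum, ENNReal.mul_rpow_of_nonneg _ _ (by positivity), ← ENNReal.rpow_mul,
          ← ENNReal.rpow_mul, mul_comm]
        congr 2 <;> field_simp

end LocalSum

section MNorm

variable {j : ℕ} {m : Fin d → ℤ}

lemma le_mNorm (j : ℕ) (m : Fin d → ℤ) :
    ENNReal.ofReal (φ j) * 2 ^ (-((j : ℝ) * d) / p) * localSum d p j m lam ≤ mNorm d p φ lam :=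
  le_iSup₂_of_le j m le_rfl

lemma ofReal_norm_le_mNorm (hp : 0 < p) (hφ0 : φ 0 = 1) (k : Fin d → ℤ) :
    ENNReal.ofReal ‖lam k‖ ≤ mNorm d p φ lam := by
  simpa [localSum_zero hp, hφ0] using le_mNorm (φ := φ) (lam := lam) (p := p) 0 k

lemma weight_mul_localSum_le_one (hG : Gp d p φ) (hφ0 : φ 0 = 1) (hp : 0 < p)
    (hlam : ∀ k, ‖lam k‖ ≤ 1)
    (hsub : ∀ k k', inCube d j m k → inCube d j m k' → lam k ≠ 0 → lam k' ≠ 0 → k = k') :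
    ENNReal.ofReal (φ j) * 2 ^ (-((j : ℝ) * d) / p) * localSum d p j m lam ≤ 1 := by
  have hloc : localSum d p j m lam ≤ 1 := by
    simpa using localSum_le_card_rpow (κ := Unit) hp hlam (fun _ => ()) fun x y _ =>
      Subtype.ext (Subtype.ext (hsub _ _ x.1.2 y.1.2 x.2 y.2))
  simpa using mul_le_mul' (Gp.weight_le_one hG hφ0 j) hloc

lemma mNorm_single_le_one (hG : Gp d p φ) (hφ0 : φ 0 = 1) (hp : 0 < p) (k₀ : Fin d → ℤ) :
    mNorm d p φ (Pi.single k₀ 1) ≤ 1 := by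
  refine iSup₂_le fun j m => weight_mul_localSum_le_one hG hφ0 hp (fun k => ?_)
    fun k k' _ _ hk hk' => ?_
  · by_cases h : k = k₀ <;> simp [h]
  · simp only [Pi.single_apply, ne_eq, ite_eq_right_iff, one_ne_zero, imp_false,
      not_not] at hk hk'
    rw [hk, hk']

end MNorm

lemma card_fun_fin_two_pow_rpow (n : ℕ) :
    (Fintype.card (Fin d → Fin (2 ^ n)) : ℝ≥0∞) ^ (1 / p) = 2 ^ ((n : ℝ) * d / p) := by
  rw [card_fun_fin_two_pow, ← ENNReal.rpow_mul, mul_one_div]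

lemma inCube_two_pow_mul {a J : ℕ} (haJ : a ≤ J) (v : Fin d → Fin (2 ^ (J - a))) :
    inCube d J 0 (fun i => 2 ^ a * (v i : ℤ)) := fun i => by
  refine ⟨by simp only [Pi.zero_apply, mul_zero]; positivity, ?_⟩
  calc (2 : ℤ) ^ a * (v i : ℕ) < 2 ^ a * 2 ^ (J - a) := by gcongr; exact_mod_cast (v i).2
    _ = 2 ^ J * (0 + 1) := by rw [← pow_add, Nat.add_sub_cancel' haJ, zero_add, mul_one]

def sparseIndicator (d J a : ℕ) : (Fin d → ℤ) → ℂ :=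
  Set.indicator {k | inCube d J 0 k ∧ ∀ i, 2 ^ a ∣ k i} 1

lemma norm_sparseIndicator_le (J a : ℕ) (k : Fin d → ℤ) : ‖sparseIndicator d J a k‖ ≤ 1 :=
  (norm_indicator_le_norm_self _ _).trans_eq (by simp)

lemma mem_of_sparseIndicator_ne_zero {J a : ℕ} {k : Fin d → ℤ}
    (hk : sparseIndicator d J a k ≠ 0) : inCube d J 0 k ∧ ∀ i, 2 ^ a ∣ k i :=
  Set.mem_of_indicator_ne_zero (s := {k | inCube d J 0 k ∧ ∀ i, 2 ^ a ∣ k i}) hk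

lemma mNorm_sparseIndicator_le (hG : Gp d p φ) (hφ0 : φ 0 = 1) (hp : 0 < p) {J a : ℕ}
    (haJ : a ≤ J) :
    mNorm d p φ (sparseIndicator d J a)
      ≤ max 1 (ENNReal.ofReal (φ J) * 2 ^ (-((a : ℝ) * d) / p)) := by
  have hsupp := @mem_of_sparseIndicator_ne_zero d J a
  refine iSup₂_le fun j m => ?_
  rcases le_total j a with hja | haj
  · refine (weight_mul_localSum_le_one hG hφ0 hp (norm_sparseIndicator_le J a)
      fun k k' hk hk' h h' => eq_of_inCube_of_dvd hk hk' hja (hsupp h).2 (hsupp h').2).trans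
      (le_max_left _ _)
  obtain ⟨m', hm'⟩ := exists_inCube_min j J m 0
  have han : a ≤ min j J := le_min haj haJ
  -- the support in `Q_{-j,m}` lies in a cube of level `min j J` and is spread `2^a` apart
  have hloc : localSum d p j m (sparseIndicator d J a) ≤ 2 ^ (((min j J - a : ℕ) : ℝ) * d / p) := by
    rw [← card_fun_fin_two_pow_rpow]
    refine localSum_le_card_rpow hp (norm_sparseIndicator_le J a)
      (fun k => cubeEquiv d _ m' ⟨_, inCube_ediv_two_pow (hm' _ k.1.2 (hsupp k.2).1) han⟩)
      fun k k' h => ?_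
    have h' := congrArg Subtype.val ((cubeEquiv d _ m').injective h)
    exact Subtype.ext (Subtype.ext
      (eq_of_ediv_two_pow_eq (hsupp k.2).2 (hsupp k'.2).2 (congrFun h')))
  calc ENNReal.ofReal (φ j) * 2 ^ (-((j : ℝ) * d) / p) * localSum d p j m (sparseIndicator d J a)
      ≤ ENNReal.ofReal (φ j) * 2 ^ (-((j : ℝ) * d) / p) * 2 ^ ((min j J : ℕ) * (d : ℝ) / p)
          * 2 ^ (-((a : ℝ) * d) / p) := by
        rw [mul_assoc (ENNReal.ofReal (φ j) * _) (2 ^ _), two_rpow_mul_two_rpow]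
        gcongr
        exact hloc.trans_eq (by rw [Nat.cast_sub han]; ring_nf)
    _ ≤ ENNReal.ofReal (φ J) * 2 ^ (-((a : ℝ) * d) / p) := by
        gcongr; exact Gp.weight_mul_two_rpow_min_le hG j J
    _ ≤ _ := le_max_right _ _

lemma le_mNorm_sparseIndicator (hp : 0 < p) {J a : ℕ} (haJ : a ≤ J) :
    ENNReal.ofReal (φ J) * 2 ^ (-((a : ℝ) * d) / p) ≤ mNorm d p φ (sparseIndicator d J a) := by
  have hloc : 2 ^ (((J - a : ℕ) : ℝ) * d / p) ≤ localSum d p J 0 (sparseIndicator d J a) := by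
    rw [← card_fun_fin_two_pow_rpow]
    refine card_rpow_le_localSum hp (fun v => ⟨_, inCube_two_pow_mul haJ v⟩) (fun v w h => ?_)
      fun v => ?_
    · funext i
      exact Fin.ext (by simpa using congrFun (congrArg Subtype.val h) i)
    · rw [sparseIndicator, Set.indicator_of_mem
        (show _ ∈ {k | inCube d J 0 k ∧ ∀ i, 2 ^ a ∣ k i} from
          ⟨inCube_two_pow_mul haJ v, fun i => dvd_mul_right _ _⟩)]
      simp
  calc ENNReal.ofReal (φ J) * 2 ^ (-((a : ℝ) * d) / p)
      = ENNReal.ofReal (φ J) * 2 ^ (-((J : ℝ) * d) / p) * 2 ^ (((J - a : ℕ) : ℝ) * d / p) := by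
        rw [mul_assoc, two_rpow_mul_two_rpow, Nat.cast_sub haJ]
        ring_nf
    _ ≤ _ := by gcongr
    _ ≤ _ := le_mNorm J 0

section Embedding

variable {p₁ p₂ : ℝ} {φ₁ φ₂ : ℕ → ℝ}

lemma mNorm_le_of_le_mul (hp₂ : 0 < p₂) (hp : p₂ ≤ p₁) (hφ₁ : ∀ j, 0 ≤ φ₁ j) {C : ℝ}
    (hC : ∀ j, φ₂ j ≤ C * φ₁ j) (lam : (Fin d → ℤ) → ℂ) :
    mNorm d p₂ φ₂ lam ≤ ENNReal.ofReal C * mNorm d p₁ φ₁ lam := by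
  refine iSup₂_le fun j m => ?_
  calc ENNReal.ofReal (φ₂ j) * 2 ^ (-((j : ℝ) * d) / p₂) * localSum d p₂ j m lam
      ≤ ENNReal.ofReal (C * φ₁ j) * 2 ^ (-((j : ℝ) * d) / p₂)
          * (2 ^ ((j : ℝ) * d * (1 / p₂ - 1 / p₁)) * localSum d p₁ j m lam) := by
        gcongr
        exacts [hC j, localSum_le_two_rpow_mul_localSum hp₂ hp j m]
    _ = ENNReal.ofReal C
          * (ENNReal.ofReal (φ₁ j) * 2 ^ (-((j : ℝ) * d) / p₁) * localSum d p₁ j m lam) := by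
        rw [ENNReal.ofReal_mul' (hφ₁ j), mul_assoc _ (2 ^ _), ← mul_assoc (2 ^ _),
          two_rpow_mul_two_rpow]
        ring_nf
    _ ≤ ENNReal.ofReal C * mNorm d p₁ φ₁ lam := by gcongr; exact le_mNorm j m

lemma mNorm_le_of_le_mul_rpow (hp₁ : 0 < p₁) (hp : p₁ ≤ p₂) (hφ₁ : ∀ j, 0 ≤ φ₁ j)
    (hφ₁0 : φ₁ 0 = 1) {C : ℝ} (hC : ∀ j, φ₂ j ≤ C * φ₁ j ^ (p₁ / p₂))
    (lam : (Fin d → ℤ) → ℂ) :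
    mNorm d p₂ φ₂ lam ≤ ENNReal.ofReal C * mNorm d p₁ φ₁ lam := by
  have hp₂ : 0 < p₂ := hp₁.trans_le hp
  refine iSup₂_le fun j m => ?_
  have hweight : (2 : ℝ≥0∞) ^ (-((j : ℝ) * d) / p₂) = (2 ^ (-((j : ℝ) * d) / p₁)) ^ (p₁ / p₂) := by
    rw [← ENNReal.rpow_mul]
    congr 1
    field_simp
  set M := mNorm d p₁ φ₁ lam
  set ϱ := p₁ / p₂
  have hϱ : 0 ≤ ϱ := by positivity
  have hϱ1 : ϱ ≤ 1 := div_le_one_of_le₀ hp hp₂.le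
  calc ENNReal.ofReal (φ₂ j) * 2 ^ (-((j : ℝ) * d) / p₂) * localSum d p₂ j m lam
      ≤ ENNReal.ofReal (C * φ₁ j ^ ϱ) * 2 ^ (-((j : ℝ) * d) / p₂)
          * (M ^ (1 - ϱ) * localSum d p₁ j m lam ^ ϱ) := by
        gcongr
        exacts [hC j, localSum_le_rpow_mul_localSum_rpow hp₁ hp
          (fun k => ofReal_norm_le_mNorm hp₁ hφ₁0 k) j m]
    _ = ENNReal.ofReal C * M ^ (1 - ϱ)
          * (ENNReal.ofReal (φ₁ j) * 2 ^ (-((j : ℝ) * d) / p₁) * localSum d p₁ j m lam) ^ ϱ := by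
        rw [ENNReal.ofReal_mul' (Real.rpow_nonneg (hφ₁ j) _),
          ← ENNReal.ofReal_rpow_of_nonneg (hφ₁ j) hϱ, hweight, ENNReal.mul_rpow_of_nonneg _ _ hϱ,
          ENNReal.mul_rpow_of_nonneg _ _ hϱ]
        ring
    _ ≤ ENNReal.ofReal C * M ^ (1 - ϱ) * M ^ ϱ := by gcongr; exact le_mNorm j m
    _ = ENNReal.ofReal C * M := by
        rw [mul_assoc, ← ENNReal.rpow_add_of_nonneg _ _ (sub_nonneg.2 hϱ1) hϱ, sub_add_cancel,
          ENNReal.rpow_one]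

lemma ofReal_mul_two_rpow_le_of_embedding (hp₁ : 0 < p₁) (hp₂ : 0 < p₂) (hG₁ : Gp d p₁ φ₁)
    (hφ₁0 : φ₁ 0 = 1) {C : ℝ≥0∞} (hC : ∀ lam, mNorm d p₂ φ₂ lam ≤ C * mNorm d p₁ φ₁ lam)
    {J a : ℕ} (haJ : a ≤ J) :
    ENNReal.ofReal (φ₂ J) * 2 ^ (-((a : ℝ) * d) / p₂)
      ≤ C * max 1 (ENNReal.ofReal (φ₁ J) * 2 ^ (-((a : ℝ) * d) / p₁)) :=
  (le_mNorm_sparseIndicator hp₂ haJ).trans <| (hC _).trans <| by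
    gcongr; exact mNorm_sparseIndicator_le hG₁ hφ₁0 hp₁ haJ

lemma le_toReal_mul_of_embedding (hp₁ : 0 < p₁) (hp₂ : 0 < p₂) (hG₁ : Gp d p₁ φ₁)
    (hφ₁0 : φ₁ 0 = 1) {C : ℝ≥0∞} (hCtop : C ≠ ⊤)
    (hC : ∀ lam, mNorm d p₂ φ₂ lam ≤ C * mNorm d p₁ φ₁ lam) (J : ℕ) :
    φ₂ J ≤ C.toReal * φ₁ J := by
  have h := ofReal_mul_two_rpow_le_of_embedding hp₁ hp₂ hG₁ hφ₁0 hC J.zero_le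
  simp only [Nat.cast_zero, zero_mul, neg_zero, zero_div, ENNReal.rpow_zero, mul_one] at h
  rw [max_eq_right (ENNReal.one_le_ofReal.2 (Gp.one_le hG₁ hφ₁0 J))] at h
  exact le_toReal_mul_of_ofReal_le hCtop (hG₁.1 J).le h

lemma le_toReal_mul_rpow_of_embedding (hp₁ : 0 < p₁) (hp₂ : 0 < p₂) (hG₁ : Gp d p₁ φ₁)
    (hφ₁0 : φ₁ 0 = 1) {C : ℝ≥0∞} (hCtop : C ≠ ⊤)
    (hC : ∀ lam, mNorm d p₂ φ₂ lam ≤ C * mNorm d p₁ φ₁ lam) (J : ℕ) :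
    φ₂ J ≤ C.toReal * 2 ^ ((d : ℝ) / p₂) * φ₁ J ^ (p₁ / p₂) := by
  have hφJ : 0 ≤ φ₁ J := (hG₁.1 J).le
  have two_pow_eq (n : ℕ) : ((2 : ℝ) ^ d) ^ n = 2 ^ ((n : ℝ) * d) := by
    rw [← pow_mul, ← Real.rpow_natCast]; push_cast; ring_nf
  have hJ : φ₁ J ^ p₁ ≤ ((2 : ℝ) ^ d) ^ J := by
    rw [two_pow_eq, ← Real.le_rpow_inv_iff_of_pos hφJ (by positivity) hp₁,
      ← Real.rpow_mul zero_le_two, ← div_eq_mul_inv]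
    exact Gp.le_two_rpow hG₁ hφ₁0 J
  obtain ⟨a, haJ, hxa, hax⟩ := exists_pow_le_mul (one_le_pow₀ one_le_two)
    (Real.one_le_rpow (Gp.one_le hG₁ hφ₁0 J) hp₁.le) hJ
  rw [two_pow_eq] at hxa hax
  have hφa : φ₁ J ≤ 2 ^ ((a : ℝ) * d / p₁) := by
    rwa [div_eq_mul_inv, Real.rpow_mul zero_le_two,
      Real.le_rpow_inv_iff_of_pos hφJ (by positivity) hp₁]
  have h := ofReal_mul_two_rpow_le_of_embedding hp₁ hp₂ hG₁ hφ₁0 hC haJ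
  rw [max_eq_left (ofReal_mul_two_rpow_neg_le_one hφa), mul_one] at h
  have h2a : (2 : ℝ) ^ ((a : ℝ) * d / p₂) ≤ 2 ^ ((d : ℝ) / p₂) * φ₁ J ^ (p₁ / p₂) :=
    calc (2 : ℝ) ^ ((a : ℝ) * d / p₂) = (2 ^ ((a : ℝ) * d)) ^ p₂⁻¹ := by
          rw [← Real.rpow_mul zero_le_two, div_eq_mul_inv]
      _ ≤ (2 ^ d * φ₁ J ^ p₁) ^ p₂⁻¹ := by gcongr
      _ = 2 ^ ((d : ℝ) / p₂) * φ₁ J ^ (p₁ / p₂) := by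
          rw [Real.mul_rpow (by positivity) (by positivity), ← Real.rpow_natCast,
            ← Real.rpow_mul zero_le_two, ← Real.rpow_mul hφJ, div_eq_mul_inv, div_eq_mul_inv]
  rw [mul_assoc]
  refine le_toReal_mul_of_ofReal_le hCtop (by positivity)
    ((le_mul_two_rpow_of_mul_two_rpow_neg_le h).trans ?_)
  gcongr
  rw [← ofReal_two_rpow]
  exact ENNReal.ofReal_le_ofReal h2a

lemma exists_bounded_separated (hd : 0 < d) (hp₁ : 0 < p₁) (hp₂ : 0 < p₂) (hG₁ : Gp d p₁ φ₁)
    (hφ₁0 : φ₁ 0 = 1) (hφ₂0 : φ₂ 0 = 1) :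
    ∃ x : ℕ → (Fin d → ℤ) → ℂ, (∀ n, mNorm d p₁ φ₁ (x n) ≤ 1) ∧
      ∀ n n' : ℕ, n ≠ n' → 1 ≤ mNorm d p₂ φ₂ (x n - x n') := by
  refine ⟨fun n => Pi.single (fun _ => (n : ℤ)) 1, fun n => mNorm_single_le_one hG₁ hφ₁0 hp₁ _,
    fun n n' hne => ?_⟩
  have hne' : (fun _ : Fin d => (n : ℤ)) ≠ fun _ => (n' : ℤ) :=
    fun h => hne (by exact_mod_cast congrFun h ⟨0, hd⟩)
  have h := ofReal_norm_le_mNorm hp₂ hφ₂0 (fun _ : Fin d => (n : ℤ))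
    (lam := Pi.single (fun _ => (n : ℤ)) (1 : ℂ) - Pi.single (fun _ => (n' : ℤ)) 1)
  rwa [Pi.sub_apply, Pi.single_eq_same, Pi.single_eq_of_ne hne', sub_zero, norm_one,
    ENNReal.ofReal_one] at h

end Embedding

end Morrey

open Morrey in
theorem stmt_13_general (d : ℕ) (hd : 0 < d) (p₁ p₂ : ℝ) (hp₁ : 0 < p₁) (hp₂ : 0 < p₂)
    (φ₁ φ₂ : ℕ → ℝ) (hGp₁ : Gp d p₁ φ₁)
    (hφ₁1 : φ₁ 0 = 1) (hφ₂1 : φ₂ 0 = 1) :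
    ((∃ C : ℝ≥0∞, C < ⊤ ∧ ∀ lam : (Fin d → ℤ) → ℂ,
        mNorm d p₂ φ₂ lam ≤ C * mNorm d p₁ φ₁ lam) ↔
      (∃ C : ℝ, ∀ j : ℕ, φ₂ j ≤ C * (φ₁ j) ^ (min 1 (p₁ / p₂)))) ∧
    ((∃ C : ℝ≥0∞, C < ⊤ ∧ ∀ lam : (Fin d → ℤ) → ℂ,
        mNorm d p₂ φ₂ lam ≤ C * mNorm d p₁ φ₁ lam) →
      ∃ (x : ℕ → (Fin d → ℤ) → ℂ) (c : ℝ≥0∞), 0 < c ∧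
        (∀ n, mNorm d p₁ φ₁ (x n) ≤ 1) ∧
        ∀ n n' : ℕ, n ≠ n' → c ≤ mNorm d p₂ φ₂ (x n - x n')) := by
  have hφ₁ : ∀ j, 0 ≤ φ₁ j := fun j => (hGp₁.1 j).le
  refine ⟨⟨fun ⟨C, hCtop, hC⟩ => ?_, fun ⟨C, hC⟩ => ⟨ENNReal.ofReal C, ENNReal.ofReal_lt_top, ?_⟩⟩,
    fun _ => ?_⟩
  · rcases le_total p₂ p₁ with hp | hp
    · refine ⟨C.toReal, fun j => ?_⟩
      rw [min_eq_left ((one_le_div hp₂).2 hp), Real.rpow_one]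
      exact le_toReal_mul_of_embedding hp₁ hp₂ hGp₁ hφ₁1 hCtop.ne hC j
    · refine ⟨C.toReal * 2 ^ ((d : ℝ) / p₂), fun j => ?_⟩
      rw [min_eq_right ((div_le_one hp₂).2 hp)]
      exact le_toReal_mul_rpow_of_embedding hp₁ hp₂ hGp₁ hφ₁1 hCtop.ne hC j
  · rcases le_total p₂ p₁ with hp | hp
    · simp only [min_eq_left ((one_le_div hp₂).2 hp), Real.rpow_one] at hC
      exact mNorm_le_of_le_mul hp₂ hp hφ₁ hC
    · simp only [min_eq_right ((div_le_one hp₂).2 hp)] at hC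
      exact mNorm_le_of_le_mul_rpow hp₁ hp hφ₁ hφ₁1 hC
  · obtain ⟨x, hx₁, hx₂⟩ := exists_bounded_separated hd hp₁ hp₂ hGp₁ hφ₁1 hφ₂1
    exact ⟨x, 1, one_pos, hx₁, hx₂⟩

theorem stmt_13 (d : ℕ) (hd : 0 < d) (p₁ p₂ : ℝ) (hp₁ : 0 < p₁) (hp₂ : 0 < p₂)
    (φ₁ φ₂ : ℕ → ℝ) (hGp₁ : Gp d p₁ φ₁) (hGp₂ : Gp d p₂ φ₂)
    (hφ₁1 : φ₁ 0 = 1) (hφ₂1 : φ₂ 0 = 1)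
    (hunb₁ : ∀ C : ℝ, ∃ k, C < φ₁ k) (hunb₂ : ∀ C : ℝ, ∃ k, C < φ₂ k) :
    ((∃ C : ℝ≥0∞, C < ⊤ ∧ ∀ lam : (Fin d → ℤ) → ℂ,
        mNorm d p₂ φ₂ lam ≤ C * mNorm d p₁ φ₁ lam) ↔
      (∃ C : ℝ, ∀ j : ℕ, φ₂ j ≤ C * (φ₁ j) ^ (min 1 (p₁ / p₂)))) ∧
    ((∃ C : ℝ≥0∞, C < ⊤ ∧ ∀ lam : (Fin d → ℤ) → ℂ,
        mNorm d p₂ φ₂ lam ≤ C * mNorm d p₁ φ₁ lam) →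
      ∃ (x : ℕ → (Fin d → ℤ) → ℂ) (c : ℝ≥0∞), 0 < c ∧
        (∀ n, mNorm d p₁ φ₁ (x n) ≤ 1) ∧
        ∀ n n' : ℕ, n ≠ n' → c ≤ mNorm d p₂ φ₂ (x n - x n')) :=
  stmt_13_general d hd p₁ p₂ hp₁ hp₂ φ₁ φ₂ hGp₁ hφ₁1 hφ₂1
end
end
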